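/- arXiv:2506.08794 — 5 statements merged into one kernel-verified Lean document; each statement's English description precedes it below -/
import Mathlib

section
/- For λ ∈ ℂ*, α ∈ ℂ, the actions L_n·s^p = λⁿ(s − nα)(s − n)^p, W_n·s^p = 0, C·s^p = 0 (extended linearly) make the polynomial ring ℂ[s] into a module over the W-algebra W(2,2); i.e., for all m, n ∈ ℤ and f ∈ ℂ[s], [L_m, L_n]·f = L_m·(L_n·f) − L_n·(L_m·f) and [L_m, W_n]·f = L_m·(W_n·f) − W_n·(L_m·f). -/
open Polynomial TensorProduct

/-- Basis index set for the W-algebra W(2,2): elements `L n`, `W n` (n ∈ ℤ) and a central `C`. -/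
inductive WIdx : Type
  | L : ℤ → WIdx
  | W : ℤ → WIdx
  | C : WIdx

/-- The central-term coefficient δ_{m+n,0}·(m³−m)/12. -/
noncomputable def deltaC (m n : ℤ) : ℂ := if m + n = 0 then ((m : ℂ)^3 - (m : ℂ))/12 else 0

/-- A representation of the W-algebra W(2,2) on a complex vector space `M`,
given by operators for each basis element satisfying the bracket relations. -/
structure WRep (M : Type*) [AddCommGroup M] [Module ℂ M] where
  ρ : WIdx → Module.End ℂ M
  rel_LL : ∀ m n : ℤ, ρ (.L m) * ρ (.L n) - ρ (.L n) * ρ (.L m)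
      = ((n : ℂ) - (m : ℂ)) • ρ (.L (m + n)) + deltaC m n • ρ .C
  rel_LW : ∀ m n : ℤ, ρ (.L m) * ρ (.W n) - ρ (.W n) * ρ (.L m)
      = ((n : ℂ) - (m : ℂ)) • ρ (.W (m + n)) + deltaC m n • ρ .C
  rel_WW : ∀ m n : ℤ, ρ (.W m) * ρ (.W n) = ρ (.W n) * ρ (.W m)
  rel_C : ∀ x, ρ .C * ρ x = ρ x * ρ .C

/-- A subspace invariant under all the operators of a representation. -/
def WInvariant {M : Type*} [AddCommGroup M] [Module ℂ M]
    (ρ : WIdx → Module.End ℂ M) (N : Submodule ℂ M) : Prop :=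
  ∀ b : WIdx, ∀ x ∈ N, ρ b x ∈ N

/-- Simplicity: the module is nonzero and has no nonzero proper invariant subspaces. -/
def WSimple {M : Type*} [AddCommGroup M] [Module ℂ M]
    (ρ : WIdx → Module.End ℂ M) : Prop :=
  (∃ x : M, x ≠ 0) ∧ ∀ N : Submodule ℂ M, WInvariant ρ N → N = ⊥ ∨ N = ⊤

/-- Module homomorphisms: linear maps intertwining the two actions. -/
def WHom {M N : Type*} [AddCommGroup M] [Module ℂ M] [AddCommGroup N] [Module ℂ N]
    (ρM : WIdx → Module.End ℂ M) (ρN : WIdx → Module.End ℂ N) (φ : M →ₗ[ℂ] N) : Prop :=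
  ∀ b : WIdx, ∀ x : M, φ (ρM b x) = ρN b (φ x)

/-- Restricted module: every vector is killed by `L n` and `W n` for all sufficiently large `n`. -/
def WRestricted {M : Type*} [AddCommGroup M] [Module ℂ M]
    (ρ : WIdx → Module.End ℂ M) : Prop :=
  ∀ x : M, ∃ N : ℤ, ∀ n : ℤ, N ≤ n → ρ (.L n) x = 0 ∧ ρ (.W n) x = 0

/-- The substitution operator f(s) ↦ f(s − n) on ℂ[s]. -/
noncomputable def shiftMap (n : ℤ) : Module.End ℂ (Polynomial ℂ) :=
  (Polynomial.aeval (Polynomial.X - Polynomial.C (n : ℂ))).toLinearMap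

/-- The action of W(2,2) on Ω(λ,α) = ℂ[s]:
`L n · f(s) = λⁿ (s − nα) f(s − n)`, `W n` and `C` act by zero. -/
noncomputable def omegaRho (lam alpha : ℂ) : WIdx → Module.End ℂ (Polynomial ℂ)
  | .L n => (lam ^ n) •
      ((LinearMap.mulLeft ℂ (Polynomial.X - Polynomial.C ((n : ℂ) * alpha))) ∘ₗ shiftMap n)
  | .W _ => 0
  | .C => 0

/-- g(t) = (h(t) − h(α))/(t − α) as an exact polynomial quotient. -/
noncomputable def gPoly (alpha : ℂ) (h : Polynomial ℂ) : Polynomial ℂ :=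
  (h - Polynomial.C (h.eval alpha)) /ₘ (Polynomial.X - Polynomial.C alpha)

/-- F(f) = g·f − f′. -/
noncomputable def Fmap (alpha : ℂ) (h : Polynomial ℂ) : Module.End ℂ (Polynomial ℂ) :=
  LinearMap.mulLeft ℂ (gPoly alpha h) - (Polynomial.derivative : Polynomial ℂ →ₗ[ℂ] Polynomial ℂ)

/-- G(f) = t·F(f) + h(α)·f. -/
noncomputable def Gmap (alpha : ℂ) (h : Polynomial ℂ) : Module.End ℂ (Polynomial ℂ) :=
  (LinearMap.mulLeft ℂ (Polynomial.X : Polynomial ℂ)) ∘ₗ Fmap alpha h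
    + (h.eval alpha) • (LinearMap.id : Polynomial ℂ →ₗ[ℂ] Polynomial ℂ)

/-- The action of W(2,2) on Ω(λ,α,h) = ℂ[s,t], realized as ℂ[s] ⊗ ℂ[t]:
`L n·(s^p t^q) = λⁿ(s−n)^p (s t^q + n G(t^q) − n²α F(t^q))`,
`W n·(s^p t^q) = λⁿ(t−nα)(s−n)^p t^q`, `C` acts by zero. -/
noncomputable def omegaHRho (lam alpha : ℂ) (h : Polynomial ℂ) :
    WIdx → Module.End ℂ (TensorProduct ℂ (Polynomial ℂ) (Polynomial ℂ))
  | .L n => (lam ^ n) •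
      (TensorProduct.map ((LinearMap.mulLeft ℂ (Polynomial.X : Polynomial ℂ)) ∘ₗ shiftMap n) LinearMap.id
        + (n : ℂ) • TensorProduct.map (shiftMap n) (Gmap alpha h)
        - ((n : ℂ)^2 * alpha) • TensorProduct.map (shiftMap n) (Fmap alpha h))
  | .W n => (lam ^ n) •
      TensorProduct.map (shiftMap n)
        (LinearMap.mulLeft ℂ (Polynomial.X - Polynomial.C ((n : ℂ) * alpha)))
  | .C => 0

/-- For λ ∈ ℂ*, α ∈ ℂ, the actions `L n · f(s) = λⁿ(s − nα) f(s − n)`, `W n · f = 0`,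
`C · f = 0` make ℂ[s] into a W(2,2)-module: the commutator of the operators for `L m`, `L n`
(resp. `L m`, `W n`) is the operator of `[L m, L n]` (resp. `[L m, W n]`). -/
theorem omegaRho_is_module (lam alpha : ℂ) (hlam : lam ≠ 0) :
    (∀ (m n : ℤ) (f : Polynomial ℂ),
      omegaRho lam alpha (.L m) (omegaRho lam alpha (.L n) f)
        - omegaRho lam alpha (.L n) (omegaRho lam alpha (.L m) f)
      = ((n : ℂ) - (m : ℂ)) • omegaRho lam alpha (.L (m + n)) f
        + deltaC m n • omegaRho lam alpha .C f) ∧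
    (∀ (m n : ℤ) (f : Polynomial ℂ),
      omegaRho lam alpha (.L m) (omegaRho lam alpha (.W n) f)
        - omegaRho lam alpha (.W n) (omegaRho lam alpha (.L m) f)
      = ((n : ℂ) - (m : ℂ)) • omegaRho lam alpha (.W (m + n)) f
        + deltaC m n • omegaRho lam alpha .C f) := by
  have hshift : ∀ (k : ℤ) (f : Polynomial ℂ), shiftMap k f = f.comp (X - C (k:ℂ)) := by
    intro k f
    simp [shiftMap, ← comp_eq_aeval]
  constructor
  · intro m n f
    simp only [omegaRho, deltaC, LinearMap.zero_apply, smul_zero, add_zero,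
      LinearMap.smul_apply, LinearMap.comp_apply, LinearMap.mulLeft_apply, map_smul,
      hshift, map_mul, mul_comp, sub_comp, X_comp, C_comp, comp_assoc]
    rw [smul_smul, smul_smul, ← zpow_add₀ hlam, ← zpow_add₀ hlam, add_comm n m,
      ← smul_sub, smul_comm ((n:ℂ) - (m:ℂ))]
    congr 1
    have e1 : (X : Polynomial ℂ) - C (m:ℂ) - C (n:ℂ) = X - C ((m+n:ℤ):ℂ) := by
      push_cast; rw [C_add]; ring
    have e2 : (X : Polynomial ℂ) - C (n:ℂ) - C (m:ℂ) = X - C ((m+n:ℤ):ℂ) := by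
      push_cast; rw [C_add]; ring
    rw [e1, e2, smul_eq_C_mul]
    push_cast
    simp only [C_add, C_mul, C_sub]
    ring
  · intro m n f
    simp only [omegaRho, deltaC, LinearMap.zero_apply, map_zero, smul_zero, add_zero,
      sub_zero, zero_sub, zero_smul, neg_zero]
end

section
/- The W(2,2)-module Ω(λ, α) = ℂ[s] (with L_n·f(s) = λⁿ(s − nα)f(s − n), W_n and C acting by zero) is a simple module if and only if α ≠ 0. -/
open Polynomial TensorProduct

lemma shiftMap_apply (n : ℤ) (f : ℂ[X]) : shiftMap n f = f.comp (X - C (n:ℂ)) := by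
  simp [shiftMap, Polynomial.aeval_def, Polynomial.comp, Polynomial.algebraMap_eq]

lemma shiftMap_shiftMap (m n : ℤ) (f : ℂ[X]) :
    shiftMap m (shiftMap n f) = shiftMap (m + n) f := by
  simp only [shiftMap_apply, Polynomial.comp_assoc]
  congr 1
  simp [Polynomial.sub_comp]
  ring

lemma shiftMap_mul (n : ℤ) (p q : ℂ[X]) :
    shiftMap n (p * q) = shiftMap n p * shiftMap n q := by
  simp [shiftMap]

lemma shiftMap_X (n : ℤ) : shiftMap n (X : ℂ[X]) = X - C (n:ℂ) := by
  simp [shiftMap]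

lemma omegaRho_L_apply (lam alpha : ℂ) (n : ℤ) (f : ℂ[X]) :
    omegaRho lam alpha (.L n) f = lam ^ n • ((X - C ((n:ℂ)*alpha)) * shiftMap n f) := by
  simp [omegaRho]

lemma omegaRho_LL_apply (lam alpha : ℂ) (hlam : lam ≠ 0) (m n : ℤ) (f : ℂ[X]) :
    omegaRho lam alpha (.L m) (omegaRho lam alpha (.L n) f)
      = lam ^ (m + n) • ((X - C ((m:ℂ)*alpha)) *
          ((X - C (m:ℂ) - C ((n:ℂ)*alpha)) * shiftMap (m+n) f)) := by
  rw [omegaRho_L_apply, omegaRho_L_apply, map_smul, mul_smul_comm, smul_smul, ← zpow_add₀ hlam,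
    shiftMap_mul, shiftMap_shiftMap]
  congr 3
  simp [shiftMap_apply, Polynomial.sub_comp]

lemma key_identity (a r : ℂ) (q : ℂ[X]) :
    (X - C (1*a)) * ((X - C 1 - C ((r-1)*a)) * q)
      + (X - C ((-1)*a)) * ((X - C (-1) - C ((r - -1)*a)) * q)
      - (2:ℂ) • ((X - C (0*a)) * ((X - C 0 - C ((r-0)*a)) * q)) = (2*a*(1-a)) • q := by
  simp only [Polynomial.smul_eq_C_mul, Polynomial.C_mul, Polynomial.C_add, Polynomial.C_sub,
    Polynomial.C_neg, Polynomial.C_1, Polynomial.C_0, map_ofNat]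
  ring

lemma one_mem_of_shifts (N : Submodule ℂ ℂ[X]) :
    ∀ d : ℕ, ∀ g : ℂ[X], g ≠ 0 → g.natDegree ≤ d → (∀ n : ℤ, shiftMap n g ∈ N) →
    (1 : ℂ[X]) ∈ N := by
  intro d
  induction d with
  | zero =>
    intro g hg hdeg hmem
    obtain ⟨c, rfl⟩ := Polynomial.natDegree_eq_zero.mp (Nat.le_zero.mp hdeg)
    have hc : c ≠ 0 := fun h => hg (by simp [h])
    have hgN : (C c : ℂ[X]) ∈ N := by simpa [shiftMap_apply] using hmem 0
    have : (1 : ℂ[X]) = c⁻¹ • (C c : ℂ[X]) := by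
      simp [Polynomial.smul_C, inv_mul_cancel₀ hc]
    rw [this]; exact N.smul_mem _ hgN
  | succ d ih =>
    intro g hg hdeg hmem
    by_cases hd : g.natDegree ≤ d
    · exact ih g hg hd hmem
    have hdeg' : g.natDegree = d + 1 := le_antisymm hdeg (Nat.not_le.mp hd)
    set h : ℂ[X] := shiftMap 1 g - g with hh
    have hhc : h = g.comp (X - C 1) - g := by
      simp [hh, shiftMap_apply]
    have hne : h ≠ 0 := by
      intro h0
      have hcomp : g.comp (X - C 1) = g := by
        have := sub_eq_zero.mp (hhc ▸ h0)
        simpa using this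
      have heval : ∀ k : ℕ, g.eval (k : ℂ) = g.eval 0 := by
        intro k
        induction k with
        | zero => simp
        | succ k ihk =>
          have := congrArg (Polynomial.eval ((k : ℂ) + 1)) hcomp
          rw [Polynomial.eval_comp] at this
          simp at this
          push_cast
          rw [← this, ihk]
      have hroot : (g - C (g.eval 0)) = 0 := by
        apply Polynomial.eq_zero_of_infinite_isRoot
        apply Set.infinite_of_injective_forall_mem (f := fun k : ℕ => (k : ℂ))
        · exact fun a b hab => Nat.cast_injective hab
        · intro k; simp [Polynomial.IsRoot, heval k]
      have hgc : g = C (g.eval 0) := sub_eq_zero.mp hroot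
      have : g.natDegree = 0 := by rw [hgc]; exact Polynomial.natDegree_C _
      omega
    have hdegh : h.natDegree ≤ d := by
      rw [Polynomial.natDegree_le_iff_coeff_eq_zero]
      intro m hm
      have hdc : (g.comp (X - C 1)).natDegree = d + 1 := by
        rw [Polynomial.natDegree_comp, hdeg', Polynomial.natDegree_X_sub_C, mul_one]
      rcases eq_or_lt_of_le (Nat.succ_le_of_lt hm) with hm1 | hm1
      · have hm1' : m = d + 1 := by omega
        subst hm1'
        have hlc : (g.comp (X - C 1)).coeff (d+1) = g.coeff (d+1) := by
          have h1 : (g.comp (X - C 1)).coeff (d+1) = (g.comp (X - C 1)).leadingCoeff := by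
            rw [Polynomial.leadingCoeff, hdc]
          have h2 : (g.comp (X - C 1)).leadingCoeff = g.leadingCoeff := by
            rw [Polynomial.leadingCoeff_comp (by rw [Polynomial.natDegree_X_sub_C]; omega),
              (Polynomial.monic_X_sub_C (1:ℂ)).leadingCoeff, one_pow, mul_one]
          rw [h1, h2, Polynomial.leadingCoeff, hdeg']
        rw [hhc, Polynomial.coeff_sub, hlc, sub_self]
      · rw [hhc, Polynomial.coeff_sub,
          Polynomial.coeff_eq_zero_of_natDegree_lt (by omega : (g.comp (X - C 1)).natDegree < m),
          Polynomial.coeff_eq_zero_of_natDegree_lt (by omega : g.natDegree < m), sub_self]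
    have hshift : ∀ n : ℤ, shiftMap n h ∈ N := by
      intro n
      have : shiftMap n h = shiftMap (n + 1) g - shiftMap n g := by
        rw [hh, map_sub, shiftMap_shiftMap]
      rw [this]
      exact N.sub_mem (hmem _) (hmem _)
    exact ih h hne hdegh hshift


/-- Ω(λ,α) = ℂ[s] is a simple W(2,2)-module if and only if α ≠ 0. -/
theorem omega_simple_iff (lam alpha : ℂ) (hlam : lam ≠ 0) :
    WSimple (omegaRho lam alpha) ↔ alpha ≠ 0 := by
  constructor
  · rintro ⟨-, hN⟩ ha
    have hInv : WInvariant (omegaRho lam alpha) (LinearMap.ker (Polynomial.lcoeff ℂ 0)) := by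
      intro b x hx
      cases b with
      | L n =>
        rw [LinearMap.mem_ker] at hx ⊢
        rw [omegaRho_L_apply]
        simp [ha, Polynomial.coeff_smul, Polynomial.mul_coeff_zero, Polynomial.lcoeff_apply,
          Polynomial.coeff_X_zero]
      | W n => simp [omegaRho]
      | C => simp [omegaRho]
    rcases hN _ hInv with h | h
    · have hXk : (X:ℂ[X]) ∈ LinearMap.ker (Polynomial.lcoeff ℂ 0) := by
        simp [Polynomial.lcoeff_apply]
      rw [h] at hXk
      have hX0 : (X:ℂ[X]) = 0 := by simpa using hXk
      exact Polynomial.X_ne_zero hX0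
    · have h1k : (1:ℂ[X]) ∈ LinearMap.ker (Polynomial.lcoeff ℂ 0) := h ▸ Submodule.mem_top
      simp [Polynomial.lcoeff_apply] at h1k
  · intro ha
    refine ⟨⟨1, one_ne_zero⟩, fun N hInv => ?_⟩
    by_cases hbot : N = ⊥
    · exact Or.inl hbot
    right
    obtain ⟨f, hfN, hf⟩ := Submodule.exists_mem_ne_zero_of_ne_bot hbot
    have hshifts : ∃ g : ℂ[X], g ≠ 0 ∧ ∀ n : ℤ, shiftMap n g ∈ N := by
      by_cases h1 : alpha = 1
      · refine ⟨X * f, mul_ne_zero Polynomial.X_ne_zero hf, fun n => ?_⟩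
        have hmem := hInv (.L n) f hfN
        rw [omegaRho_L_apply] at hmem
        have heq : shiftMap n (X * f) = (X - C ((n:ℂ)*alpha)) * shiftMap n f := by
          rw [shiftMap_mul, shiftMap_X, h1, mul_one]
        rw [heq]
        have := N.smul_mem (lam ^ n)⁻¹ hmem
        rwa [smul_smul, inv_mul_cancel₀ (zpow_ne_zero n hlam), one_smul] at this
      · refine ⟨f, hf, fun r => ?_⟩
        have hE : ∀ m : ℤ, (X - C ((m:ℂ)*alpha)) *
            ((X - C (m:ℂ) - C ((((r - m):ℤ):ℂ)*alpha)) * shiftMap r f) ∈ N := by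
          intro m
          have hmem := hInv (.L m) _ (hInv (.L (r - m)) f hfN)
          rw [omegaRho_LL_apply lam alpha hlam] at hmem
          have hr : m + (r - m) = r := by omega
          rw [hr] at hmem
          have := N.smul_mem (lam ^ r)⁻¹ hmem
          rwa [smul_smul, inv_mul_cancel₀ (zpow_ne_zero r hlam), one_smul] at this
        have h1' := hE 1
        have h0' := hE 0
        have hm1 := hE (-1)
        simp only [Int.cast_one, Int.cast_zero, Int.cast_neg, Int.cast_sub] at h1' h0' hm1
        have hsum : ((2:ℂ)*alpha*(1-alpha)) • shiftMap r f ∈ N := by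
          rw [← key_identity alpha (r:ℂ) (shiftMap r f)]
          exact N.sub_mem (N.add_mem h1' hm1) (N.smul_mem _ h0')
        have hc : (2:ℂ)*alpha*(1-alpha) ≠ 0 :=
          mul_ne_zero (mul_ne_zero two_ne_zero ha) (sub_ne_zero.mpr (Ne.symm h1))
        have := N.smul_mem ((2:ℂ)*alpha*(1-alpha))⁻¹ hsum
        rwa [smul_smul, inv_mul_cancel₀ hc, one_smul] at this
    obtain ⟨g, hg, hsh⟩ := hshifts
    have h1N : (1:ℂ[X]) ∈ N := one_mem_of_shifts N g.natDegree g hg le_rfl hsh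
    have hX : ∀ p ∈ N, (X:ℂ[X]) * p ∈ N := by
      intro p hp
      have := hInv (.L 0) p hp
      rw [omegaRho_L_apply] at this
      simpa [shiftMap_apply] using this
    have hXpow : ∀ k : ℕ, (X:ℂ[X])^k ∈ N := by
      intro k
      induction k with
      | zero => simpa using h1N
      | succ k ih => rw [pow_succ, mul_comm]; exact hX _ ih
    rw [Submodule.eq_top_iff']
    intro p
    induction p using Polynomial.induction_on' with
    | add p q hp hq => exact N.add_mem hp hq
    | monomial n a =>
      rw [← Polynomial.C_mul_X_pow_eq_monomial, ← Polynomial.smul_eq_C_mul]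
      exact N.smul_mem a (hXpow n)
end

section
/- Let α ≠ 0. Then Hom_{W(2,2)}(Ω(λ₁,α₁,h₁), Ω(λ₂,α₂,h₂)) is nonzero if and only if λ₁ = λ₂, α₁ = α₂, and h₁ = h₂; in that case every module homomorphism is a scalar multiple of the identity map on ℂ[s,t]. -/
open Polynomial TensorProduct

/-!
The operators `L₀` and `W₀` are multiplication by `s` and `t`, which generate `ℂ[s,t]`, so a
homomorphism is multiplication by `Q = φ 1`. Viewing `ℂ[s,t]` as `ℂ[t][s]`, the relation for `W₁`
reads `λ₁(t - α₁) Q(s) = λ₂(t - α₂) Q(s - 1)`; leading coefficients in `s` give `λ₁ = λ₂`,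
`α₁ = α₂`, and then `Q` is `1`-periodic in `s`, hence `Q = p(t)`. The relations for `L₁` and
`L₋₁` then give `F₁(1) p = F₂(p)` and `G₁(1) p = G₂(p)`, i.e. `p' = (g₂ - g₁) p` and
`h₁(α) = h₂(α)`. Comparing degrees forces `g₁ = g₂` and `p' = 0`, so `h₁ = h₂` and `p` is a
constant.
-/

theorem LinearMap.commute_mulLeft_of_adjoin_eq_top {R A : Type*} [CommSemiring R] [Semiring A]
    [Algebra R A] {s : Set A} (hs : Algebra.adjoin R s = ⊤) {φ : A →ₗ[R] A}
    (h : ∀ x ∈ s, Commute (mulLeft R x) φ) (a : A) : Commute (mulLeft R a) φ := by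
  have hle : Algebra.adjoin R s ≤ (Subalgebra.centralizer R {φ}).comap (Algebra.lmul R A) :=
    Algebra.adjoin_le fun x hx ↦ (Subalgebra.mem_centralizer_iff R).mpr fun _ hg ↦
      (Set.mem_singleton_iff.mp hg) ▸ (h x hx).symm.eq
  have ha : Algebra.lmul R A a ∈ Subalgebra.centralizer R {φ} := (hs ▸ hle) Algebra.mem_top
  exact ((Subalgebra.mem_centralizer_iff R).mp ha φ rfl).symm

namespace Polynomial

section CommRing

variable {R : Type*} [CommRing R]

theorem adjoin_X_tmul_one_one_tmul_X :
    Algebra.adjoin R {(X : R[X]) ⊗ₜ[R] (1 : R[X]), (1 : R[X]) ⊗ₜ[R] (X : R[X])} = ⊤ := by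
  set S := Algebra.adjoin R {(X : R[X]) ⊗ₜ[R] (1 : R[X]), (1 : R[X]) ⊗ₜ[R] (X : R[X])}
  have mem_of_X_mem (ι : R[X] →ₐ[R] R[X] ⊗[R] R[X]) (hι : ι X ∈ S) (f : R[X]) : ι f ∈ S := by
    rw [← aeval_X_left_apply f, ← aeval_algHom_apply]
    exact Algebra.adjoin_singleton_le hι (aeval_mem_adjoin_singleton R _)
  rw [eq_top_iff, ← Algebra.TensorProduct.adjoin_tmul_eq_top, Algebra.adjoin_le_iff]
  rintro _ ⟨f, g, rfl⟩
  rw [← mul_one f, ← one_mul g, ← Algebra.TensorProduct.tmul_mul_tmul]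
  exact S.mul_mem (mem_of_X_mem Algebra.TensorProduct.includeLeft
      (Algebra.subset_adjoin (by simp)) f)
    (mem_of_X_mem Algebra.TensorProduct.includeRight (Algebra.subset_adjoin (by simp)) g)

variable (R) in
-- The first tensor factor (the variable `s`) becomes the outer variable.
noncomputable def tensorPolyEquiv : R[X] ⊗[R] R[X] ≃ₐ[R] R[X][X] :=
  (Algebra.TensorProduct.comm R _ _).trans (polyEquivTensor R R[X]).symm

theorem tensorPolyEquiv_tmul (f g : R[X]) :
    tensorPolyEquiv R (f ⊗ₜ[R] g) = C g * f.map C := by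
  simp [tensorPolyEquiv, polyEquivTensor_symm_apply_tmul_eq_smul, smul_eq_C_mul]

theorem tensorPolyEquiv_one_tmul (g : R[X]) : tensorPolyEquiv R ((1 : R[X]) ⊗ₜ[R] g) = C g := by
  simp [tensorPolyEquiv_tmul]

end CommRing

section IsDomain

variable {R : Type*} [CommRing R] [IsDomain R]

theorem eq_of_C_mul_eq_C_mul_comp {a b c : R} {q : R[X]} (hq : q ≠ 0)
    (h : C a * q = C b * q.comp (X - C c)) : a = b := by
  have hlc := congrArg leadingCoeff h
  rw [leadingCoeff_mul, leadingCoeff_mul, leadingCoeff_comp (by simp), leadingCoeff_C,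
    leadingCoeff_C, leadingCoeff_X_sub_C, one_pow, mul_one] at hlc
  exact mul_right_cancel₀ (leadingCoeff_ne_zero.mpr hq) hlc

theorem eq_and_eq_of_C_mul_X_sub_C_eq {l₁ l₂ a₁ a₂ : R} (hl₁ : l₁ ≠ 0)
    (h : C l₁ * (X - C a₁) = C l₂ * (X - C a₂)) : l₁ = l₂ ∧ a₁ = a₂ := by
  have hl : l₁ = l₂ := by simpa using congrArg (coeff · 1) h
  subst hl
  refine ⟨rfl, ?_⟩
  simpa using congrArg (coeff · 0) (mul_left_cancel₀ (C_ne_zero.mpr hl₁) h)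

theorem eq_C_eval_zero_of_comp_X_sub_one [CharZero R] {q : R[X]} (h : q.comp (X - 1) = q) :
    q = C (q.eval 0) := by
  have periodic (n : ℕ) : q.eval (n : R) = q.eval 0 := by
    induction n with
    | zero => simp
    | succ n ih => simpa [eval_comp, ih] using congrArg (eval ((n + 1 : ℕ) : R)) h.symm
  refine eq_of_infinite_eval_eq _ _ (Set.infinite_of_injective_forall_mem Nat.cast_injective ?_)
  simpa using periodic

theorem eq_zero_of_derivative_eq_mul {p q : R[X]} (hp : p ≠ 0) (h : derivative p = q * p) :
    q = 0 := by
  by_contra hq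
  have hp' : derivative p ≠ 0 := h ▸ mul_ne_zero hq hp
  have hdeg := natDegree_derivative_lt fun h0 ↦ hp' (derivative_of_natDegree_zero h0)
  rw [h, natDegree_mul hq hp] at hdeg
  omega

end IsDomain

end Polynomial

theorem X_sub_C_mul_gPoly (alpha : ℂ) (h : ℂ[X]) :
    (X - C alpha) * gPoly alpha h = h - C (h.eval alpha) :=
  mul_divByMonic_eq_iff_isRoot.mpr (by simp)

theorem eq_of_gPoly_eq_of_eval_eq {alpha : ℂ} {h₁ h₂ : ℂ[X]} (hg : gPoly alpha h₁ = gPoly alpha h₂)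
    (he : h₁.eval alpha = h₂.eval alpha) : h₁ = h₂ := by
  have k₁ := X_sub_C_mul_gPoly alpha h₁
  have k₂ := X_sub_C_mul_gPoly alpha h₂
  rw [hg, he] at k₁
  simpa using k₁.symm.trans k₂

theorem Fmap_apply (alpha : ℂ) (h p : ℂ[X]) :
    Fmap alpha h p = gPoly alpha h * p - derivative p := by
  simp [Fmap]

theorem Gmap_apply (alpha : ℂ) (h p : ℂ[X]) :
    Gmap alpha h p = X * Fmap alpha h p + C (h.eval alpha) * p := by
  simp [Gmap, smul_eq_C_mul]

theorem eq_and_derivative_eq_zero_of_Fmap_Gmap {alpha : ℂ} {h₁ h₂ p : ℂ[X]} (hp : p ≠ 0)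
    (hF : Fmap alpha h₁ 1 * p = Fmap alpha h₂ p) (hG : Gmap alpha h₁ 1 * p = Gmap alpha h₂ p) :
    h₁ = h₂ ∧ derivative p = 0 := by
  rw [Gmap_apply, Gmap_apply, ← hF] at hG
  rw [Fmap_apply, Fmap_apply, derivative_one, mul_one, sub_zero] at hF
  have hg : gPoly alpha h₂ - gPoly alpha h₁ = 0 :=
    eq_zero_of_derivative_eq_mul hp (by linear_combination hF)
  have he : C (h₁.eval alpha) = C (h₂.eval alpha) :=
    mul_right_cancel₀ hp (by linear_combination hG)
  refine ⟨eq_of_gPoly_eq_of_eval_eq (sub_eq_zero.mp hg).symm (C_injective he), ?_⟩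
  linear_combination hF + p * hg

theorem shiftMap_zero : shiftMap 0 = LinearMap.id := by
  ext f : 1
  simp [shiftMap]

theorem omegaHRho_L_zero (lam alpha : ℂ) (h : ℂ[X]) :
    omegaHRho lam alpha h (.L 0) = LinearMap.mulLeft ℂ ((X : ℂ[X]) ⊗ₜ[ℂ] (1 : ℂ[X])) := by
  refine TensorProduct.ext' fun f g ↦ ?_
  simp [omegaHRho, shiftMap_zero]

theorem omegaHRho_W_zero (lam alpha : ℂ) (h : ℂ[X]) :
    omegaHRho lam alpha h (.W 0) = LinearMap.mulLeft ℂ ((1 : ℂ[X]) ⊗ₜ[ℂ] (X : ℂ[X])) := by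
  refine TensorProduct.ext' fun f g ↦ ?_
  simp [omegaHRho, shiftMap_zero, mul_comm]

theorem tensorPolyEquiv_omegaHRho_W (lam alpha : ℂ) (h : ℂ[X]) (n : ℤ) (x : ℂ[X] ⊗[ℂ] ℂ[X]) :
    tensorPolyEquiv ℂ (omegaHRho lam alpha h (.W n) x)
      = lam ^ n • (C (X - C (n * alpha)) * (tensorPolyEquiv ℂ x).comp (X - C (C (n : ℂ)))) := by
  induction x using TensorProduct.induction_on with
  | zero => simp
  | tmul f g =>
    simp [omegaHRho, tensorPolyEquiv_tmul, shiftMap, mul_comp, Polynomial.map_comp,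
      ← comp_eq_aeval, mul_assoc]
  | add x y hx hy => simp_all [add_comp, mul_add]

theorem omegaHRho_L_one_tmul (lam alpha : ℂ) (h p : ℂ[X]) (n : ℤ) :
    omegaHRho lam alpha h (.L n) ((1 : ℂ[X]) ⊗ₜ[ℂ] p) = lam ^ n • ((X : ℂ[X]) ⊗ₜ[ℂ] p
      + (1 : ℂ[X]) ⊗ₜ[ℂ] ((n : ℂ) • Gmap alpha h p - ((n : ℂ) ^ 2 * alpha) • Fmap alpha h p)) := by
  simp [omegaHRho, shiftMap, tmul_sub, tmul_smul, add_sub_assoc]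

namespace WHom

variable {lam lam1 lam2 alpha alpha1 alpha2 : ℂ} {h1 h2 : ℂ[X]}
  {φ : ℂ[X] ⊗[ℂ] ℂ[X] →ₗ[ℂ] ℂ[X] ⊗[ℂ] ℂ[X]}

theorem map_eq_mul_map_one (hφ : WHom (omegaHRho lam1 alpha1 h1) (omegaHRho lam2 alpha2 h2) φ)
    (a : ℂ[X] ⊗[ℂ] ℂ[X]) : φ a = a * φ 1 := by
  have hgen : ∀ x ∈ ({(X : ℂ[X]) ⊗ₜ[ℂ] (1 : ℂ[X]), (1 : ℂ[X]) ⊗ₜ[ℂ] (X : ℂ[X])} : Set _),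
      Commute (LinearMap.mulLeft ℂ x) φ := by
    rintro x (rfl | rfl) <;> refine LinearMap.ext fun m ↦ Eq.symm ?_
    · simpa [omegaHRho_L_zero] using hφ (.L 0) m
    · simpa [omegaHRho_W_zero] using hφ (.W 0) m
  simpa using (LinearMap.congr_fun
    (LinearMap.commute_mulLeft_of_adjoin_eq_top adjoin_X_tmul_one_one_tmul_X hgen a).eq 1).symm

theorem exists_map_one_eq_one_tmul (hl1 : lam1 ≠ 0)
    (hφ : WHom (omegaHRho lam1 alpha1 h1) (omegaHRho lam2 alpha2 h2) φ) (h0 : φ 1 ≠ 0) :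
    lam1 = lam2 ∧ alpha1 = alpha2 ∧ ∃ p : ℂ[X], φ 1 = (1 : ℂ[X]) ⊗ₜ[ℂ] p := by
  set Q := tensorPolyEquiv ℂ (φ 1)
  have hQ : Q ≠ 0 := (map_ne_zero_iff _ (tensorPolyEquiv ℂ).injective).mpr h0
  have hW : C (C lam1 * (X - C alpha1)) * Q
      = C (C lam2 * (X - C alpha2)) * Q.comp (X - C (C 1)) := by
    have := congrArg (tensorPolyEquiv ℂ) (hφ (.W 1) 1)
    rw [hφ.map_eq_mul_map_one, map_mul, tensorPolyEquiv_omegaHRho_W,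
      tensorPolyEquiv_omegaHRho_W] at this
    simpa [Algebra.smul_def, mul_assoc, Q] using this
  obtain ⟨rfl, rfl⟩ := eq_and_eq_of_C_mul_X_sub_C_eq hl1 (eq_of_C_mul_eq_C_mul_comp hQ hW)
  have hperiodic : Q.comp (X - 1) = Q := by
    have ha : C (C lam1 * (X - C alpha1)) ≠ 0 :=
      C_ne_zero.mpr (mul_ne_zero (C_ne_zero.mpr hl1) (X_sub_C_ne_zero alpha1))
    simpa using (mul_left_cancel₀ ha hW).symm
  refine ⟨rfl, rfl, Q.eval 0, (tensorPolyEquiv ℂ).injective ?_⟩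
  rw [tensorPolyEquiv_one_tmul]
  exact eq_C_eval_zero_of_comp_X_sub_one hperiodic

theorem Fmap_Gmap_eq_of_map_one_eq (hl : lam ≠ 0) (ha : alpha ≠ 0)
    (hφ : WHom (omegaHRho lam alpha h1) (omegaHRho lam alpha h2) φ) {p : ℂ[X]}
    (hp : φ 1 = (1 : ℂ[X]) ⊗ₜ[ℂ] p) :
    Fmap alpha h1 1 * p = Fmap alpha h2 p ∧ Gmap alpha h1 1 * p = Gmap alpha h2 p := by
  have key (n : ℤ) : (n : ℂ) • (Gmap alpha h1 1 * p) - ((n : ℂ) ^ 2 * alpha) • (Fmap alpha h1 1 * p)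
      = (n : ℂ) • Gmap alpha h2 p - ((n : ℂ) ^ 2 * alpha) • Fmap alpha h2 p := by
    have := hφ (.L n) ((1 : ℂ[X]) ⊗ₜ[ℂ] (1 : ℂ[X]))
    rw [hφ.map_eq_mul_map_one, omegaHRho_L_one_tmul, ← Algebra.TensorProduct.one_def, hp,
      omegaHRho_L_one_tmul, smul_mul_assoc, add_mul, Algebra.TensorProduct.tmul_mul_tmul,
      Algebra.TensorProduct.tmul_mul_tmul, mul_one, one_mul, one_mul, sub_mul, smul_mul_assoc,
      smul_mul_assoc] at this
    exact Algebra.TensorProduct.includeRight_injective (R := ℂ) (A := ℂ[X]) C_injective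
      (add_left_cancel (smul_right_injective _ (zpow_ne_zero n hl) this))
  have k₁ := key 1
  have k₂ := key (-1)
  simp only [Int.cast_one, Int.cast_neg, one_pow, neg_one_sq, one_mul, one_smul, neg_smul] at k₁ k₂
  -- `n = ±1` separates the part linear in `n` from the part quadratic in `n`.
  have hF : alpha • (Fmap alpha h1 1 * p) = alpha • Fmap alpha h2 p := by
    linear_combination (norm := module) (-(1 : ℂ) / 2) • (k₁ + k₂)
  exact ⟨smul_right_injective _ ha hF, by linear_combination (norm := module) k₁ + hF⟩

theorem eq_smul_id (hl1 : lam1 ≠ 0) (ha1 : alpha1 ≠ 0)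
    (hφ : WHom (omegaHRho lam1 alpha1 h1) (omegaHRho lam2 alpha2 h2) φ) (hne : φ ≠ 0) :
    lam1 = lam2 ∧ alpha1 = alpha2 ∧ h1 = h2 ∧ ∃ c : ℂ, φ = c • LinearMap.id := by
  have h0 : φ 1 ≠ 0 := fun h0 ↦ hne (LinearMap.ext fun a ↦ by simp [hφ.map_eq_mul_map_one a, h0])
  obtain ⟨rfl, rfl, p, hp⟩ := hφ.exists_map_one_eq_one_tmul hl1 h0
  have hp0 : p ≠ 0 := by rintro rfl; simp [hp] at h0
  obtain ⟨hF, hG⟩ := hφ.Fmap_Gmap_eq_of_map_one_eq hl1 ha1 hp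
  obtain ⟨rfl, hder⟩ := eq_and_derivative_eq_zero_of_Fmap_Gmap hp0 hF hG
  obtain ⟨c, rfl⟩ : ∃ c, p = C c := ⟨_, eq_C_of_natDegree_eq_zero (derivative_eq_zero.mp hder)⟩
  refine ⟨rfl, rfl, rfl, c, LinearMap.ext fun a ↦ ?_⟩
  rw [hφ.map_eq_mul_map_one, hp, ← algebraMap_eq, Algebra.algebraMap_eq_smul_one, tmul_smul,
    ← Algebra.TensorProduct.one_def, mul_smul_comm, mul_one, LinearMap.smul_apply,
    LinearMap.id_apply]

end WHom

theorem omegaH_hom_classification_general (lam1 lam2 alpha1 alpha2 : ℂ) (h1 h2 : Polynomial ℂ)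
    (hl1 : lam1 ≠ 0) (ha1 : alpha1 ≠ 0) :
    ((∃ φ : TensorProduct ℂ (Polynomial ℂ) (Polynomial ℂ) →ₗ[ℂ]
          TensorProduct ℂ (Polynomial ℂ) (Polynomial ℂ),
        WHom (omegaHRho lam1 alpha1 h1) (omegaHRho lam2 alpha2 h2) φ ∧ φ ≠ 0)
      ↔ (lam1 = lam2 ∧ alpha1 = alpha2 ∧ h1 = h2)) ∧
    (lam1 = lam2 → alpha1 = alpha2 → h1 = h2 →
      ∀ φ : TensorProduct ℂ (Polynomial ℂ) (Polynomial ℂ) →ₗ[ℂ]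
          TensorProduct ℂ (Polynomial ℂ) (Polynomial ℂ),
        WHom (omegaHRho lam1 alpha1 h1) (omegaHRho lam2 alpha2 h2) φ →
        ∃ c : ℂ, φ = c • (LinearMap.id : TensorProduct ℂ (Polynomial ℂ) (Polynomial ℂ) →ₗ[ℂ]
          TensorProduct ℂ (Polynomial ℂ) (Polynomial ℂ))) := by
  refine ⟨⟨fun ⟨φ, hφ, hne⟩ ↦ ?_, ?_⟩, ?_⟩
  · obtain ⟨hl, ha, hh, -⟩ := hφ.eq_smul_id hl1 ha1 hne
    exact ⟨hl, ha, hh⟩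
  · rintro ⟨rfl, rfl, rfl⟩
    exact ⟨LinearMap.id, fun _ _ ↦ rfl, fun h ↦ one_ne_zero (LinearMap.congr_fun h 1)⟩
  · rintro rfl rfl rfl φ hφ
    by_cases hne : φ = 0
    · exact ⟨0, by rw [hne, zero_smul]⟩
    · exact (hφ.eq_smul_id hl1 ha1 hne).2.2.2

/-- For αᵢ ∈ ℂ*: there is a nonzero W(2,2)-module homomorphism
Ω(λ₁,α₁,h₁) → Ω(λ₂,α₂,h₂) iff λ₁ = λ₂, α₁ = α₂ and h₁ = h₂; and in that case every
homomorphism is a scalar multiple of the identity. -/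
theorem omegaH_hom_classification (lam1 lam2 alpha1 alpha2 : ℂ) (h1 h2 : Polynomial ℂ)
    (hl1 : lam1 ≠ 0) (hl2 : lam2 ≠ 0) (ha1 : alpha1 ≠ 0) (ha2 : alpha2 ≠ 0) :
    ((∃ φ : TensorProduct ℂ (Polynomial ℂ) (Polynomial ℂ) →ₗ[ℂ]
          TensorProduct ℂ (Polynomial ℂ) (Polynomial ℂ),
        WHom (omegaHRho lam1 alpha1 h1) (omegaHRho lam2 alpha2 h2) φ ∧ φ ≠ 0)
      ↔ (lam1 = lam2 ∧ alpha1 = alpha2 ∧ h1 = h2)) ∧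
    (lam1 = lam2 → alpha1 = alpha2 → h1 = h2 →
      ∀ φ : TensorProduct ℂ (Polynomial ℂ) (Polynomial ℂ) →ₗ[ℂ]
          TensorProduct ℂ (Polynomial ℂ) (Polynomial ℂ),
        WHom (omegaHRho lam1 alpha1 h1) (omegaHRho lam2 alpha2 h2) φ →
        ∃ c : ℂ, φ = c • (LinearMap.id : TensorProduct ℂ (Polynomial ℂ) (Polynomial ℂ) →ₗ[ℂ]
          TensorProduct ℂ (Polynomial ℂ) (Polynomial ℂ))) :=
  omegaH_hom_classification_general lam1 lam2 alpha1 alpha2 h1 h2 hl1 ha1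
end

section
/- (Tan–Zhao determinant lemma) Let λ₁, …, λ_m ∈ ℂ* be (not necessarily distinct) and s₁, …, s_m ≥ 1 with s₁ + ⋯ + s_m = s. For 1 ≤ t ≤ m and s₁+⋯+s_{t−1}+1 ≤ k ≤ s₁+⋯+s_t define f_k(n) = n^{k−1−(s₁+⋯+s_{t−1})} λ_t^n. Let R be the s × s matrix with entries y_{pq} = f_q(p + r − 1) for a fixed integer r ≥ 0. Then det R = ∏_{j=1}^m (s_j − 1)^{!!} λ_j^{s_j(s_j + 2r − 1)/2} ∏_{1 ≤ i < j ≤ m} (λ_j − λ_i)^{s_i s_j}, where m^{!!} = m!·(m−1)!·⋯·1! and 0^{!!} = 1. -/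
/-- Superfactorial: `sfac m = m! · (m−1)! ⋯ 1!`, with `sfac 0 = 1`. -/
def sfac : ℕ → ℕ
  | 0 => 1
  | n + 1 => (n + 1).factorial * sfac n

/-- Row/column index for the Tan–Zhao matrix: the element `⟨t, i⟩` (block `t`, position `i`)
corresponds to the (0-based) number `s₁ + ⋯ + s_{t−1} + i`. -/
def tzIdx {m : ℕ} (s : Fin m → ℕ) (p : Σ t : Fin m, Fin (s t)) : ℕ :=
  (∑ j ∈ Finset.univ.filter (fun j : Fin m => j < p.1), s j) + (p.2 : ℕ)


open Polynomial Finset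

lemma det_of_upperTri {ι : Type*} [Fintype ι] [DecidableEq ι] (w : ι → ℕ)
    (hw : Function.Injective w) (M : Matrix ι ι ℂ)
    (h : ∀ p q, w q < w p → M p q = 0) : M.det = ∏ p, M p p := by
  letI : LinearOrder ι := LinearOrder.lift' w hw
  have hlt : ∀ a b : ι, a < b ↔ w a < w b := by
    intro a b
    simp only [lt_iff_le_not_ge]
    exact Iff.rfl
  apply Matrix.det_of_upperTriangular
  intro i j hij
  exact h i j ((hlt j i).mp hij)

lemma det_of_lowerTri {ι : Type*} [Fintype ι] [DecidableEq ι] (w : ι → ℕ)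
    (hw : Function.Injective w) (M : Matrix ι ι ℂ)
    (h : ∀ p q, w p < w q → M p q = 0) : M.det = ∏ p, M p p := by
  rw [← Matrix.det_transpose]
  exact det_of_upperTri w hw _ (fun p q hpq => h q p hpq)

lemma deriv_vanish (a : ℂ) : ∀ (j : ℕ) (k : ℕ) (g : Polynomial ℂ), j < k →
    (Polynomial.derivative^[j] ((X - C a) ^ k * g)).eval a = 0 := by
  intro j
  induction j with
  | zero =>
    intro k g hk
    simp only [Function.iterate_zero, id, eval_mul, eval_pow, eval_sub, eval_X, eval_C, sub_self,
      zero_pow (by omega : k ≠ 0), zero_mul]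
  | succ j ih =>
    intro k g hk
    obtain ⟨k', rfl⟩ : ∃ k', k = k' + 1 := ⟨k - 1, by omega⟩
    rw [Function.iterate_succ_apply]
    have hd : Polynomial.derivative ((X - C a) ^ (k' + 1) * g)
        = (X - C a) ^ k' * ((C ((k' : ℂ) + 1)) * g + (X - C a) * Polynomial.derivative g) := by
      rw [derivative_mul, derivative_pow, derivative_X_sub_C]
      push_cast
      ring
    rw [hd]
    exact ih k' _ (by omega)

lemma deriv_diag (a : ℂ) : ∀ (i : ℕ) (g : Polynomial ℂ),
    (Polynomial.derivative^[i] ((X - C a) ^ i * g)).eval a = (i.factorial : ℂ) * g.eval a := by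
  intro i
  induction i with
  | zero => intro g; simp
  | succ i ih =>
    intro g
    rw [Function.iterate_succ_apply]
    have hd : Polynomial.derivative ((X - C a) ^ (i + 1) * g)
        = (X - C a) ^ i * ((C ((i : ℂ) + 1)) * g + (X - C a) * Polynomial.derivative g) := by
      rw [derivative_mul, derivative_pow, derivative_X_sub_C]
      push_cast
      ring
    rw [hd, ih]
    simp [Nat.factorial_succ]
    ring

lemma prod_factorial_sfac : ∀ n : ℕ, (∏ i ∈ range n, i.factorial) = sfac (n - 1) := by
  intro n
  induction n with
  | zero => simp [sfac]
  | succ n ih =>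
    rw [Finset.prod_range_succ, ih]
    cases n with
    | zero => simp [sfac]
    | succ k =>
      show sfac k * (k+1).factorial = sfac (k + 1)
      rw [show sfac (k+1) = (k+1).factorial * sfac k from rfl]
      ring

lemma exp_arith (n r : ℕ) (hn : 1 ≤ n) :
    r * n + n * (n - 1) / 2 = n * (n + 2 * r - 1) / 2 := by
  obtain ⟨k, rfl⟩ : ∃ k, n = k + 1 := ⟨n - 1, by omega⟩
  obtain ⟨c, hc⟩ : ∃ c, (k + 1) * k = 2 * c := by
    obtain ⟨c, hc⟩ := Nat.even_mul_succ_self k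
    exact ⟨c, by rw [mul_comm (k+1) k, hc]; ring⟩
  have h1 : k + 1 + 2 * r - 1 = k + 2 * r := by omega
  have h2 : (k + 1) * (k + 2 * r) = 2 * (c + (k + 1) * r) := by
    rw [Nat.mul_add, hc]; ring
  rw [h1, h2, Nat.add_sub_cancel, hc]
  rw [Nat.mul_div_cancel_left _ two_pos, Nat.mul_div_cancel_left _ two_pos]
  ring

section tz

variable {m : ℕ} (s : Fin m → ℕ)

lemma tz_core {t u : Fin m} (h : t < u) :
    (∑ j ∈ Finset.univ.filter (fun j : Fin m => j < t), s j) + s t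
      ≤ ∑ j ∈ Finset.univ.filter (fun j : Fin m => j < u), s j := by
  have hdisj : Disjoint (Finset.univ.filter (fun j : Fin m => j < t)) {t} := by
    simp [Finset.disjoint_singleton_right]
  have hsub : (Finset.univ.filter (fun j : Fin m => j < t)) ∪ {t}
      ⊆ Finset.univ.filter (fun j : Fin m => j < u) := by
    intro x hx
    simp only [Finset.mem_union, Finset.mem_filter, Finset.mem_singleton, Finset.mem_univ,
      true_and] at hx ⊢
    rcases hx with hx | rfl
    · exact hx.trans h
    · exact h
  calc (∑ j ∈ Finset.univ.filter (fun j : Fin m => j < t), s j) + s t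
      = ∑ j ∈ (Finset.univ.filter (fun j : Fin m => j < t)) ∪ {t}, s j := by
        rw [Finset.sum_union hdisj, Finset.sum_singleton]
    _ ≤ _ := Finset.sum_le_sum_of_subset hsub

lemma tzIdx_lt_of_fst_lt {p q : Σ t : Fin m, Fin (s t)} (h : p.1 < q.1) :
    tzIdx s p < tzIdx s q := by
  have h1 : tzIdx s p < (∑ j ∈ Finset.univ.filter (fun j : Fin m => j < p.1), s j) + s p.1 := by
    unfold tzIdx
    exact Nat.add_lt_add_left p.2.isLt _
  have h2 := tz_core s h
  unfold tzIdx
  omega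

lemma tzIdx_lt_total (p : Σ t : Fin m, Fin (s t)) : tzIdx s p < ∑ j, s j := by
  have h1 : tzIdx s p < (∑ j ∈ Finset.univ.filter (fun j : Fin m => j < p.1), s j) + s p.1 :=
    Nat.add_lt_add_left p.2.isLt _
  have hdisj : Disjoint (Finset.univ.filter (fun j : Fin m => j < p.1)) {p.1} := by
    simp [Finset.disjoint_singleton_right]
  have h2 : (∑ j ∈ Finset.univ.filter (fun j : Fin m => j < p.1), s j) + s p.1
      ≤ ∑ j, s j := by
    calc (∑ j ∈ Finset.univ.filter (fun j : Fin m => j < p.1), s j) + s p.1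
        = ∑ j ∈ (Finset.univ.filter (fun j : Fin m => j < p.1)) ∪ {p.1}, s j := by
          rw [Finset.sum_union hdisj, Finset.sum_singleton]
      _ ≤ _ := Finset.sum_le_sum_of_subset (Finset.subset_univ _)
  omega

lemma tzIdx_lex {p q : Σ t : Fin m, Fin (s t)} (h : tzIdx s p < tzIdx s q) :
    p.1 < q.1 ∨ (p.1 = q.1 ∧ (p.2 : ℕ) < (q.2 : ℕ)) := by
  rcases lt_trichotomy p.1 q.1 with h1 | h1 | h1
  · exact Or.inl h1
  · refine Or.inr ⟨h1, ?_⟩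
    unfold tzIdx at h
    have he : (∑ j ∈ Finset.univ.filter (fun j : Fin m => j < p.1), s j)
        = ∑ j ∈ Finset.univ.filter (fun j : Fin m => j < q.1), s j := by rw [h1]
    omega
  · exact absurd (tzIdx_lt_of_fst_lt s h1) (by omega)

lemma tzIdx_inj : Function.Injective (tzIdx s) := by
  intro p q h
  rcases lt_trichotomy p.1 q.1 with h1 | h1 | h1
  · exact absurd (tzIdx_lt_of_fst_lt s h1) (by omega)
  · obtain ⟨t, i⟩ := p
    obtain ⟨u, j⟩ := q
    dsimp at h1
    subst h1
    unfold tzIdx at h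
    simp only at h
    have : (i : ℕ) = (j : ℕ) := by omega
    simp [Fin.ext_iff, this]
  · exact absurd (tzIdx_lt_of_fst_lt s h1) (by omega)

lemma tzIdx_image :
    Finset.image (tzIdx s) Finset.univ = Finset.range (∑ j, s j) := by
  apply Finset.eq_of_subset_of_card_le
  · intro x hx
    simp only [Finset.mem_image] at hx
    obtain ⟨p, _, rfl⟩ := hx
    exact Finset.mem_range.mpr (tzIdx_lt_total s p)
  · rw [Finset.card_range, Finset.card_image_of_injective _ (tzIdx_inj s)]
    simp [Finset.card_univ, Fintype.card_sigma]

end tz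
section main

open Polynomial Finset

variable {m : ℕ} (lam : Fin m → ℂ) (s : Fin m → ℕ) (r : ℕ)

noncomputable def tzP (q : Σ t : Fin m, Fin (s t)) : Polynomial ℂ :=
  (∏ w ∈ Finset.univ.filter (fun w : Fin m => w < q.1), (X - C (lam w)) ^ (s w))
    * (X - C (lam q.1)) ^ (q.2 : ℕ)

noncomputable def tzF (q : Σ t : Fin m, Fin (s t)) : Polynomial ℂ :=
  X ^ r * tzP lam s q

noncomputable def tzHerm (q : Σ t : Fin m, Fin (s t)) (f : Polynomial ℂ) : ℂ :=
  (Polynomial.derivative^[(q.2 : ℕ)] f).eval (lam q.1)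

noncomputable def tzS : Matrix (Σ t : Fin m, Fin (s t)) (Σ t : Fin m, Fin (s t)) ℂ :=
  fun q p => ((tzIdx s p + r : ℕ) : ℂ) ^ (q.2 : ℕ) * lam q.1 ^ (tzIdx s p + r)

noncomputable def tzC : Matrix (Σ t : Fin m, Fin (s t)) (Σ t : Fin m, Fin (s t)) ℂ :=
  fun q p => tzHerm lam s q (X ^ (tzIdx s p + r))

noncomputable def tzL : Matrix (Σ t : Fin m, Fin (s t)) (Σ t : Fin m, Fin (s t)) ℂ :=
  fun q q' => if q'.1 = q.1 then
    (descPochhammer ℂ (q.2 : ℕ)).coeff (q'.2 : ℕ) * ((lam q.1)⁻¹) ^ (q.2 : ℕ) else 0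

noncomputable def tzW : Matrix (Σ t : Fin m, Fin (s t)) (Σ t : Fin m, Fin (s t)) ℂ :=
  fun p' q' => (tzF lam s r q').coeff (tzIdx s p' + r)

noncomputable def tzB : Matrix (Σ t : Fin m, Fin (s t)) (Σ t : Fin m, Fin (s t)) ℂ :=
  fun q q' => tzHerm lam s q (tzF lam s r q')

lemma tzP_monic (q : Σ t : Fin m, Fin (s t)) : (tzP lam s q).Monic := by
  apply Polynomial.Monic.mul
  · exact monic_prod_of_monic _ _ fun w _ => (monic_X_sub_C (lam w)).pow _
  · exact (monic_X_sub_C _).pow _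

lemma tzF_monic (q : Σ t : Fin m, Fin (s t)) : (tzF lam s r q).Monic :=
  (monic_X_pow r).mul (tzP_monic lam s q)

lemma tzP_natDegree (q : Σ t : Fin m, Fin (s t)) : (tzP lam s q).natDegree = tzIdx s q := by
  unfold tzP tzIdx
  rw [Polynomial.Monic.natDegree_mul
    (monic_prod_of_monic _ _ fun w _ => (monic_X_sub_C (lam w)).pow _)
    ((monic_X_sub_C _).pow _)]
  rw [natDegree_prod_of_monic _ _ fun w _ => (monic_X_sub_C (lam w)).pow _]
  simp [natDegree_pow, natDegree_X_sub_C]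

lemma tzF_natDegree (q : Σ t : Fin m, Fin (s t)) :
    (tzF lam s r q).natDegree = tzIdx s q + r := by
  unfold tzF
  rw [Polynomial.Monic.natDegree_mul (monic_X_pow r) (tzP_monic lam s q),
    natDegree_X_pow, tzP_natDegree]
  omega

lemma tzF_decomp (q' : Σ t : Fin m, Fin (s t)) :
    tzF lam s r q' = ∑ p' : Σ t : Fin m, Fin (s t),
      Polynomial.C ((tzF lam s r q').coeff (tzIdx s p' + r)) * X ^ (tzIdx s p' + r) := by
  conv_lhs => rw [Polynomial.as_sum_range' (tzF lam s r q') (r + ∑ j, s j)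
    (by rw [tzF_natDegree]; have := tzIdx_lt_total s q'; omega)]
  rw [Finset.sum_range_add]
  have h0 : ∀ i ∈ Finset.range r,
      (monomial i) ((tzF lam s r q').coeff i) = 0 := by
    intro i hi
    rw [Finset.mem_range] at hi
    have : (tzF lam s r q').coeff i = 0 := by
      unfold tzF
      rw [Polynomial.coeff_X_pow_mul']
      rw [if_neg (by omega)]
    rw [this, monomial_zero_right]
  rw [Finset.sum_eq_zero h0, zero_add]
  have himg := tzIdx_image s
  rw [← himg, Finset.sum_image (fun a _ b _ h => tzIdx_inj s h)]
  refine Finset.sum_congr rfl fun p' _ => ?_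
  rw [Polynomial.C_mul_X_pow_eq_monomial]
  rw [Nat.add_comm r (tzIdx s p')]

end main
section main2

open Polynomial Finset

variable {m : ℕ} (lam : Fin m → ℂ) (s : Fin m → ℕ) (r : ℕ)

lemma tzC_entry (q p : Σ t : Fin m, Fin (s t)) :
    tzC lam s r q p = ((tzIdx s p + r).descFactorial (q.2 : ℕ) : ℂ)
      * lam q.1 ^ (tzIdx s p + r - (q.2 : ℕ)) := by
  unfold tzC tzHerm
  rw [Polynomial.iterate_derivative_X_pow_eq_natCast_mul]
  simp

lemma tzC_eq (hlam : ∀ j, lam j ≠ 0) : tzC lam s r = tzL lam s * tzS lam s r := by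
  ext q p
  rw [Matrix.mul_apply, ← Finset.univ_sigma_univ, Finset.sum_sigma]
  set n : ℕ := tzIdx s p + r with hn
  set j : ℕ := (q.2 : ℕ) with hj
  have hstep : ∀ u : Fin m, (∑ i : Fin (s u), tzL lam s q ⟨u, i⟩ * tzS lam s r ⟨u, i⟩ p)
      = if u = q.1 then
          ∑ i : Fin (s u), (descPochhammer ℂ j).coeff (i : ℕ) * ((lam q.1)⁻¹) ^ j
            * (((n : ℕ) : ℂ) ^ (i : ℕ) * lam u ^ n) else 0 := by
    intro u
    split_ifs with hu
    · refine Finset.sum_congr rfl fun i _ => ?_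
      unfold tzL tzS
      rw [if_pos hu]
    · apply Finset.sum_eq_zero
      intro i _
      unfold tzL
      rw [if_neg hu, zero_mul]
  rw [Finset.sum_congr rfl fun u _ => hstep u, Finset.sum_ite_eq' Finset.univ q.1, if_pos (Finset.mem_univ _)]
  -- now the sum is over i : Fin (s q.1)
  have hlamq := hlam q.1
  have hsum : ∑ i : Fin (s q.1), (descPochhammer ℂ j).coeff (i : ℕ) * ((lam q.1)⁻¹) ^ j
      * (((n : ℕ) : ℂ) ^ (i : ℕ) * lam q.1 ^ n)
      = ((lam q.1)⁻¹) ^ j * lam q.1 ^ n * ((n : ℕ).descFactorial j : ℂ) := by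
    have : ∑ i : Fin (s q.1), (descPochhammer ℂ j).coeff (i : ℕ) * ((lam q.1)⁻¹) ^ j
        * (((n : ℕ) : ℂ) ^ (i : ℕ) * lam q.1 ^ n)
        = ((lam q.1)⁻¹) ^ j * lam q.1 ^ n
          * ∑ i : Fin (s q.1), (descPochhammer ℂ j).coeff (i : ℕ) * ((n : ℕ) : ℂ) ^ (i : ℕ) := by
      rw [Finset.mul_sum]
      refine Finset.sum_congr rfl fun i _ => ?_
      ring
    rw [this]
    congr 1
    have hdeg : (descPochhammer ℂ j).natDegree < s q.1 := by
      rw [descPochhammer_natDegree]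
      exact q.2.isLt
    rw [Fin.sum_univ_eq_sum_range (fun i => (descPochhammer ℂ j).coeff i * ((n : ℕ) : ℂ) ^ i)]
    rw [← Polynomial.eval_eq_sum_range' hdeg]
    rw [descPochhammer_eval_eq_descFactorial]
  rw [hsum, tzC_entry]
  by_cases hjn : j ≤ n
  · rw [pow_sub₀ _ hlamq hjn, inv_pow]
    ring
  · rw [Nat.descFactorial_eq_zero_iff_lt.mpr (by omega)]
    simp

lemma tzHerm_sum {α : Type*} (q : Σ t : Fin m, Fin (s t)) (t : Finset α) (f : α → Polynomial ℂ) :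
    tzHerm lam s q (∑ x ∈ t, f x) = ∑ x ∈ t, tzHerm lam s q (f x) := by
  unfold tzHerm
  rw [Polynomial.iterate_derivative_sum, Polynomial.eval_finset_sum]

lemma tzB_eq : tzB lam s r = tzC lam s r * tzW lam s r := by
  ext q q'
  rw [Matrix.mul_apply]
  unfold tzB
  conv_lhs => rw [tzF_decomp lam s r q']
  rw [tzHerm_sum]
  refine Finset.sum_congr rfl fun p' _ => ?_
  unfold tzC tzW tzHerm
  rw [Polynomial.iterate_derivative_C_mul, Polynomial.eval_mul, Polynomial.eval_C]
  ring

end main2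
section main3

open Polynomial Finset

variable {m : ℕ} (lam : Fin m → ℂ) (s : Fin m → ℕ) (r : ℕ)

lemma tzW_det : (tzW lam s r).det = 1 := by
  rw [det_of_upperTri (tzIdx s) (tzIdx_inj s) _ ?_]
  · rw [Finset.prod_eq_one]
    intro p _
    unfold tzW
    have h1 : tzIdx s p + r = (tzF lam s r p).natDegree := (tzF_natDegree lam s r p).symm
    rw [h1, Polynomial.coeff_natDegree, (tzF_monic lam s r p).leadingCoeff]
  · intro p q h
    unfold tzW
    apply Polynomial.coeff_eq_zero_of_natDegree_lt
    rw [tzF_natDegree]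
    omega

lemma tzL_det : (tzL lam s).det = ∏ q : Σ t : Fin m, Fin (s t), ((lam q.1)⁻¹) ^ (q.2 : ℕ) := by
  rw [det_of_lowerTri (tzIdx s) (tzIdx_inj s) _ ?_]
  · refine Finset.prod_congr rfl fun q _ => ?_
    unfold tzL
    rw [if_pos rfl]
    have hc : (descPochhammer ℂ (q.2 : ℕ)).coeff (q.2 : ℕ) = 1 := by
      have h2 := Polynomial.Monic.coeff_natDegree (monic_descPochhammer ℂ (q.2 : ℕ))
      rwa [descPochhammer_natDegree] at h2
    rw [hc, one_mul]
  · intro p q h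
    unfold tzL
    split_ifs with hq
    · rcases tzIdx_lex s h with h1 | ⟨h1, h2⟩
      · rw [hq] at h1; exact absurd h1 (lt_irrefl _)
      · rw [Polynomial.coeff_eq_zero_of_natDegree_lt, zero_mul]
        rw [descPochhammer_natDegree]
        exact h2
    · rfl

lemma tzB_det : (tzB lam s r).det = ∏ q : Σ t : Fin m, Fin (s t),
    (((q.2 : ℕ).factorial : ℂ) * (lam q.1 ^ r
      * ∏ w ∈ Finset.univ.filter (fun w : Fin m => w < q.1), (lam q.1 - lam w) ^ (s w))) := by
  rw [det_of_lowerTri (tzIdx s) (tzIdx_inj s) _ ?_]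
  · refine Finset.prod_congr rfl fun q _ => ?_
    obtain ⟨t, j⟩ := q
    have hF : tzF lam s r ⟨t, j⟩ = (X - C (lam t)) ^ (j : ℕ)
        * (X ^ r * ∏ w ∈ Finset.univ.filter (fun w : Fin m => w < t), (X - C (lam w)) ^ (s w)) := by
      unfold tzF tzP
      ring
    unfold tzB tzHerm
    rw [hF, deriv_diag]
    simp only [eval_mul, eval_pow, eval_prod, eval_sub, eval_X, eval_C]
  · intro q q' h
    rcases tzIdx_lex s h with h1 | ⟨h1, h2⟩
    · obtain ⟨t, j⟩ := q
      obtain ⟨u, i⟩ := q'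
      dsimp at h1
      have ht : t ∈ Finset.univ.filter (fun w : Fin m => w < u) := by
        simp [h1]
      have hF : tzF lam s r ⟨u, i⟩ = (X - C (lam t)) ^ (s t)
          * (X ^ r * ((∏ w ∈ (Finset.univ.filter (fun w : Fin m => w < u)).erase t,
              (X - C (lam w)) ^ (s w)) * (X - C (lam u)) ^ (i : ℕ))) := by
        unfold tzF tzP
        rw [← Finset.mul_prod_erase _ _ ht]
        ring
      unfold tzB tzHerm
      rw [hF]
      exact deriv_vanish _ _ _ _ j.isLt
    · obtain ⟨t, j⟩ := q
      obtain ⟨u, i⟩ := q'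
      dsimp at h1 h2
      subst h1
      have hF : tzF lam s r ⟨t, i⟩ = (X - C (lam t)) ^ (i : ℕ)
          * (X ^ r * ∏ w ∈ Finset.univ.filter (fun w : Fin m => w < t),
              (X - C (lam w)) ^ (s w)) := by
        unfold tzF tzP
        ring
      unfold tzB tzHerm
      rw [hF]
      exact deriv_vanish _ _ _ _ h2

end main3
section main4

open Polynomial Finset

variable {m : ℕ} (lam : Fin m → ℂ) (s : Fin m → ℕ) (r : ℕ)

lemma pair_prod :
    (∏ t : Fin m, (∏ w ∈ Finset.univ.filter (fun w : Fin m => w < t),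
        (lam t - lam w) ^ (s w)) ^ (s t))
    = ∏ pr ∈ Finset.univ.filter (fun pr : Fin m × Fin m => pr.1 < pr.2),
        (lam pr.2 - lam pr.1) ^ (s pr.1 * s pr.2) := by
  have lhs_eq : (∏ t : Fin m, (∏ w ∈ Finset.univ.filter (fun w : Fin m => w < t),
      (lam t - lam w) ^ (s w)) ^ (s t))
      = ∏ t : Fin m, ∏ w ∈ Finset.univ.filter (fun w : Fin m => w < t),
        (lam t - lam w) ^ (s w * s t) := by
    refine Finset.prod_congr rfl fun t _ => ?_
    rw [← Finset.prod_pow]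
    refine Finset.prod_congr rfl fun w _ => ?_
    rw [← pow_mul]
  rw [lhs_eq]
  rw [Finset.prod_comm' (t' := (Finset.univ : Finset (Fin m)))
    (s' := fun w => Finset.univ.filter (fun t : Fin m => w < t)) ?_]
  · rw [Finset.prod_filter, Fintype.prod_prod_type]
    refine Finset.prod_congr rfl fun w _ => ?_
    rw [Finset.prod_filter]
  · intro x y
    simp only [Finset.mem_univ, Finset.mem_filter, true_and, and_true]

theorem tan_zhao_det' (hlam : ∀ j, lam j ≠ 0) (hs : ∀ j, 1 ≤ s j) :
    Matrix.det (Matrix.of fun p q : Σ t : Fin m, Fin (s t) =>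
      ((tzIdx s p + r : ℕ) : ℂ) ^ (q.2 : ℕ) * lam q.1 ^ (tzIdx s p + r))
    = (∏ j : Fin m, ((sfac (s j - 1) : ℂ) * lam j ^ (s j * (s j + 2 * r - 1) / 2)))
      * ∏ pr ∈ Finset.univ.filter (fun pr : Fin m × Fin m => pr.1 < pr.2),
          (lam pr.2 - lam pr.1) ^ (s pr.1 * s pr.2) := by
  classical
  have htr : (Matrix.of fun p q : Σ t : Fin m, Fin (s t) =>
      ((tzIdx s p + r : ℕ) : ℂ) ^ (q.2 : ℕ) * lam q.1 ^ (tzIdx s p + r))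
      = (tzS lam s r).transpose := rfl
  rw [htr, Matrix.det_transpose]
  -- determinant relations
  have h1 : (tzC lam s r).det = (tzL lam s).det * (tzS lam s r).det := by
    rw [tzC_eq lam s r hlam, Matrix.det_mul]
  have h2 : (tzB lam s r).det = (tzC lam s r).det := by
    rw [tzB_eq, Matrix.det_mul, tzW_det, mul_one]
  set Q : ℂ := ∏ q : Σ t : Fin m, Fin (s t), (lam q.1) ^ (q.2 : ℕ) with hQdef
  have hLQ : (tzL lam s).det * Q = 1 := by
    rw [tzL_det, hQdef, ← Finset.prod_mul_distrib]
    apply Finset.prod_eq_one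
    intro q _
    rw [← mul_pow, inv_mul_cancel₀ (hlam q.1), one_pow]
  have hS : (tzS lam s r).det = (tzB lam s r).det * Q := by
    calc (tzS lam s r).det = ((tzL lam s).det * Q) * (tzS lam s r).det := by
          rw [hLQ, one_mul]
      _ = ((tzL lam s).det * (tzS lam s r).det) * Q := by ring
      _ = (tzB lam s r).det * Q := by rw [← h1, ← h2]
  rw [hS, tzB_det, hQdef, ← Finset.prod_mul_distrib]
  rw [← Finset.univ_sigma_univ, Finset.prod_sigma]
  have hblock : ∀ t : Fin m,
      (∏ i : Fin (s t), (((i : ℕ).factorial : ℂ) * (lam t ^ r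
        * ∏ w ∈ Finset.univ.filter (fun w : Fin m => w < t), (lam t - lam w) ^ (s w))
          * lam t ^ (i : ℕ)))
      = ((sfac (s t - 1) : ℂ) * lam t ^ (s t * (s t + 2 * r - 1) / 2))
        * (∏ w ∈ Finset.univ.filter (fun w : Fin m => w < t), (lam t - lam w) ^ (s w)) ^ (s t) := by
    intro t
    rw [Finset.prod_mul_distrib, Finset.prod_mul_distrib]
    rw [Finset.prod_const]
    have hfac : (∏ i : Fin (s t), ((i : ℕ).factorial : ℂ)) = (sfac (s t - 1) : ℂ) := by
      rw [← Nat.cast_prod]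
      congr 1
      rw [Fin.prod_univ_eq_prod_range (fun i => i.factorial), prod_factorial_sfac]
    have hpow : (∏ i : Fin (s t), lam t ^ (i : ℕ)) = lam t ^ ((s t) * (s t - 1) / 2) := by
      rw [Finset.prod_pow_eq_pow_sum]
      congr 1
      rw [Fin.sum_univ_eq_sum_range (fun i => i), Finset.sum_range_id]
    rw [hfac, hpow, Finset.card_univ, Fintype.card_fin]
    rw [mul_pow, ← pow_mul]
    have hexp : r * s t + s t * (s t - 1) / 2 = s t * (s t + 2 * r - 1) / 2 :=
      exp_arith (s t) r (hs t)
    calc (sfac (s t - 1) : ℂ) * (lam t ^ (r * s t)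
          * (∏ w ∈ Finset.univ.filter (fun w : Fin m => w < t), (lam t - lam w) ^ (s w)) ^ (s t))
          * lam t ^ (s t * (s t - 1) / 2)
        = (sfac (s t - 1) : ℂ) * (lam t ^ (r * s t) * lam t ^ (s t * (s t - 1) / 2))
          * (∏ w ∈ Finset.univ.filter (fun w : Fin m => w < t), (lam t - lam w) ^ (s w)) ^ (s t) := by
          ring
      _ = _ := by rw [← pow_add, hexp]
  calc (∏ t : Fin m, ∏ i : Fin (s t),
        (((i : ℕ).factorial : ℂ) * (lam t ^ r
          * ∏ w ∈ Finset.univ.filter (fun w : Fin m => w < t), (lam t - lam w) ^ (s w))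
            * lam t ^ (i : ℕ)))
      = ∏ t : Fin m, (((sfac (s t - 1) : ℂ) * lam t ^ (s t * (s t + 2 * r - 1) / 2))
          * (∏ w ∈ Finset.univ.filter (fun w : Fin m => w < t), (lam t - lam w) ^ (s w)) ^ (s t)) :=
        Finset.prod_congr rfl fun t _ => hblock t
    _ = _ := by
        rw [Finset.prod_mul_distrib, pair_prod]

end main4


/-- (Tan–Zhao determinant lemma) For λ₁,…,λ_m ∈ ℂ*, block sizes s₁,…,s_m ≥ 1 with
s = s₁ + ⋯ + s_m, and r ≥ 0, the s × s matrix with entries `f_q(p + r − 1)`, where for `q`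
in block `t` at position `i` one has `f_q(n) = nⁱ λ_tⁿ`, has determinant
`∏_j (s_j−1)^{!!} λ_j^{s_j(s_j+2r−1)/2} · ∏_{i<j} (λ_j − λ_i)^{s_i s_j}`.
(Rows and columns are indexed by `Σ t : Fin m, Fin (s t)`, each identified with a number
via `tzIdx`; the determinant is independent of this identification.) -/
theorem tan_zhao_det (m : ℕ) (lam : Fin m → ℂ) (hlam : ∀ j, lam j ≠ 0)
    (s : Fin m → ℕ) (hs : ∀ j, 1 ≤ s j) (r : ℕ) :
    Matrix.det (Matrix.of fun p q : Σ t : Fin m, Fin (s t) =>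
      ((tzIdx s p + r : ℕ) : ℂ) ^ (q.2 : ℕ) * lam q.1 ^ (tzIdx s p + r))
    = (∏ j : Fin m, ((sfac (s j - 1) : ℂ) * lam j ^ (s j * (s j + 2 * r - 1) / 2)))
      * ∏ pr ∈ Finset.univ.filter (fun pr : Fin m × Fin m => pr.1 < pr.2),
          (lam pr.2 - lam pr.1) ^ (s pr.1 * s pr.2) := by
  exact tan_zhao_det' lam s r hlam hs
end

section
/- Let T = Ω(λ₁,α₁,h₁) ⊗ ⋯ ⊗ Ω(λ_m,α_m,h_m) ⊗ V with λ₁, …, λ_m pairwise distinct nonzero complex numbers, α_k ∈ ℂ*, and V a simple restricted W(2,2)-module. Then for any nonzero v ∈ V, the element 1 ⊗ ⋯ ⊗ 1 ⊗ v generates T as a W(2,2)-module. -/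
open Polynomial TensorProduct

/-- Variables s₁,…,s_m (left) and t₁,…,t_m (right). -/
abbrev WVars (m : ℕ) := Fin m ⊕ Fin m

/-- Linear map on multivariate polynomials defined by its values on monomials. -/
noncomputable def mkLin {σ : Type*} {M : Type*} [AddCommGroup M] [Module ℂ M]
    (φ : (σ →₀ ℕ) → M) : MvPolynomial σ ℂ →ₗ[ℂ] M :=
  ((MvPolynomial.basisMonomials σ ℂ).constr ℂ) φ

/-- The part of the monomial `d` in the variables other than s_k, t_k. -/
noncomputable def others {m : ℕ} (k : Fin m) (d : WVars m →₀ ℕ) : MvPolynomial (WVars m) ℂ :=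
  MvPolynomial.monomial ((d.erase (Sum.inl k)).erase (Sum.inr k)) 1

/-- Action of `W n` on the k-th tensor factor Ω(λ_k,α_k,h_k) inside ℂ[s₁,…,s_m,t₁,…,t_m]. -/
noncomputable def siteW {m : ℕ} (lam alpha : Fin m → ℂ) (n : ℤ) (k : Fin m) :
    Module.End ℂ (MvPolynomial (WVars m) ℂ) :=
  mkLin fun d => (lam k ^ n) •
    ((MvPolynomial.X (Sum.inr k) - MvPolynomial.C ((n : ℂ) * alpha k)) *
      (MvPolynomial.X (Sum.inl k) - MvPolynomial.C (n : ℂ)) ^ (d (Sum.inl k)) *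
      MvPolynomial.X (Sum.inr k) ^ (d (Sum.inr k)) * others k d)

/-- Action of `L n` on the k-th tensor factor Ω(λ_k,α_k,h_k) inside ℂ[s₁,…,s_m,t₁,…,t_m]. -/
noncomputable def siteL {m : ℕ} (lam alpha : Fin m → ℂ) (h : Fin m → Polynomial ℂ)
    (n : ℤ) (k : Fin m) : Module.End ℂ (MvPolynomial (WVars m) ℂ) :=
  mkLin fun d => (lam k ^ n) •
    ((MvPolynomial.X (Sum.inl k) - MvPolynomial.C (n : ℂ)) ^ (d (Sum.inl k)) * others k d *
      (MvPolynomial.X (Sum.inl k) * MvPolynomial.X (Sum.inr k) ^ (d (Sum.inr k))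
        + (n : ℂ) • Polynomial.aeval (MvPolynomial.X (Sum.inr k) : MvPolynomial (WVars m) ℂ)
            (Gmap (alpha k) (h k) (Polynomial.X ^ (d (Sum.inr k))))
        - ((n : ℂ)^2 * alpha k) • Polynomial.aeval (MvPolynomial.X (Sum.inr k) : MvPolynomial (WVars m) ℂ)
            (Fmap (alpha k) (h k) (Polynomial.X ^ (d (Sum.inr k))))))

/-- The diagonal action of W(2,2) on the tensor product module
T = Ω(λ₁,α₁,h₁) ⊗ ⋯ ⊗ Ω(λ_m,α_m,h_m) ⊗ V, with the polynomial factors realized as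
ℂ[s₁,…,s_m,t₁,…,t_m] and `ρV` the action on `V`. -/
noncomputable def bigRho {m : ℕ} {V : Type*} [AddCommGroup V] [Module ℂ V]
    (lam alpha : Fin m → ℂ) (h : Fin m → Polynomial ℂ) (ρV : WIdx → Module.End ℂ V) :
    WIdx → Module.End ℂ (TensorProduct ℂ (MvPolynomial (WVars m) ℂ) V)
  | .L n => (∑ k : Fin m, TensorProduct.map (siteL lam alpha h n k) LinearMap.id)
      + TensorProduct.map LinearMap.id (ρV (.L n))
  | .W n => (∑ k : Fin m, TensorProduct.map (siteW lam alpha n k) LinearMap.id)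
      + TensorProduct.map LinearMap.id (ρV (.W n))
  | .C => TensorProduct.map LinearMap.id (ρV .C)

/-- Carrier of the tensor product module T = Ω(λ₁,α₁,h₁) ⊗ ⋯ ⊗ Ω(λ_m,α_m,h_m) ⊗ V. -/
abbrev TMod (m : ℕ) (V : Type*) [AddCommGroup V] [Module ℂ V] :=
  TensorProduct ℂ (MvPolynomial (WVars m) ℂ) V

/-!
Let `N` be an invariant subspace containing `1 ⊗ v`. For `n ≫ 0` the operators `L n` and `W n`
kill `v`, so applied to `q ⊗ v` they give `∑ₖ λₖⁿ Pₖ(n) ⊗ v`, where each `Pₖ` is a polynomial in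
`n` with coefficients in `ℂ[s,t]`. Because the `λₖ` are distinct and nonzero, a sequence of this
shape that lies in `N` for all large `n` has all its coefficients in `N` (kill the components one
at a time with the twisted difference operators `expDiff`). The constant coefficient of `Pₖ` is
`tₖ q` for `W` and `sₖ q` for `L`, so `ℂ[s,t] ⊗ v ⊆ N`. Then
`U = {x ∈ V | ℂ[s,t] ⊗ x ⊆ N}` is a nonzero submodule of `V`, hence all of `V` by simplicity.
-/

namespace Polynomial

variable {K : Type*} [Field K]

-- On sequences `n ↦ ν ^ n * p(n)` the operator `u ↦ (n ↦ u (n + 1) - μ * u n)` acts as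
-- `p ↦ expDiff μ ν p`.
noncomputable def expDiff (μ ν : K) : K[X] →ₗ[K] K[X] :=
  ν • taylor 1 - μ • LinearMap.id

theorem eval_expDiff (μ ν : K) (p : K[X]) (x : K) :
    (expDiff μ ν p).eval x = ν * p.eval (x + 1) - μ * p.eval x := by
  simp [expDiff, taylor_eval]

theorem degree_expDiff_self_lt {p : K[X]} (μ : K) (hp : p ≠ 0) :
    (expDiff μ μ p).degree < p.degree := by
  have : expDiff μ μ p = μ • (taylor 1 p - p) := by simp [expDiff, smul_sub]
  rw [this]
  exact (degree_smul_le _ _).trans_lt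
    (degree_sub_lt_right (degree_taylor p 1) hp (leadingCoeff_taylor 1 p))

theorem expDiff_self_pow_eq_zero (μ : K) {p : K[X]} {d : ℕ} (hd : p.degree < d) :
    (expDiff μ μ ^ d) p = 0 := by
  induction d generalizing p with
  | zero => simpa using hd
  | succ d ih =>
    rcases eq_or_ne p 0 with rfl | hp
    · exact map_zero _
    rw [pow_succ, Module.End.mul_apply]
    refine ih ((degree_expDiff_self_lt μ hp).trans_le (Order.lt_succ_iff.mp ?_))
    exact_mod_cast hd

theorem expDiff_injective {μ ν : K} (h : ν ≠ μ) : Function.Injective (expDiff μ ν) := by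
  rw [← LinearMap.ker_eq_bot, LinearMap.ker_eq_bot']
  intro p hp
  have hcoeff : (ν - μ) * p.leadingCoeff = 0 := by
    simpa [expDiff, coeff_taylor_natDegree, sub_mul] using congrArg (coeff · p.natDegree) hp
  simpa [sub_ne_zero.mpr h] using hcoeff

variable {ι : Type*} {μ : ι → K} {p : ι → K[X]} {N₀ : ℤ}

theorem sum_zpow_mul_eval_expDiff_eq_zero {s : Finset ι} (hμ : ∀ k ∈ s, μ k ≠ 0) (c : K)
    (h : ∀ n : ℤ, N₀ ≤ n → ∑ k ∈ s, μ k ^ n * (p k).eval (n : K) = 0) (n : ℤ) (hn : N₀ ≤ n) :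
    ∑ k ∈ s, μ k ^ n * (expDiff c (μ k) (p k)).eval (n : K) = 0 := by
  calc ∑ k ∈ s, μ k ^ n * (expDiff c (μ k) (p k)).eval (n : K)
      = ∑ k ∈ s, μ k ^ (n + 1) * (p k).eval ((n + 1 : ℤ) : K)
          - c * ∑ k ∈ s, μ k ^ n * (p k).eval (n : K) := by
        rw [Finset.mul_sum, ← Finset.sum_sub_distrib]
        refine Finset.sum_congr rfl fun k hk => ?_
        rw [eval_expDiff, zpow_add_one₀ (hμ k hk)]
        push_cast
        ring
    _ = 0 := by rw [h (n + 1) (by omega), h n hn, mul_zero, sub_zero]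

theorem sum_zpow_mul_eval_expDiff_pow_eq_zero {s : Finset ι} (hμ : ∀ k ∈ s, μ k ≠ 0) (c : K)
    (h : ∀ n : ℤ, N₀ ≤ n → ∑ k ∈ s, μ k ^ n * (p k).eval (n : K) = 0) (j : ℕ) (n : ℤ)
    (hn : N₀ ≤ n) : ∑ k ∈ s, μ k ^ n * ((expDiff c (μ k) ^ j) (p k)).eval (n : K) = 0 := by
  induction j generalizing n with
  | zero => simpa using h n hn
  | succ j ih =>
    simp only [pow_succ', Module.End.mul_apply]
    exact sum_zpow_mul_eval_expDiff_eq_zero hμ c ih n hn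

variable [CharZero K]

theorem eq_zero_of_forall_le_eval_intCast_eq_zero {q : K[X]}
    (h : ∀ n : ℤ, N₀ ≤ n → q.eval (n : K) = 0) : q = 0 := by
  refine eq_zero_of_infinite_isRoot q (Set.infinite_of_injective_forall_mem
    (f := fun i : ℕ => ((N₀ + i : ℤ) : K)) (fun i j hij => ?_) fun i => h _ (by omega))
  have := Int.cast_injective (α := K) hij
  omega

theorem eq_zero_of_sum_zpow_mul_eval_eq_zero (s : Finset ι) (hμ : ∀ k ∈ s, μ k ≠ 0)
    (hinj : Set.InjOn μ s) (h : ∀ n : ℤ, N₀ ≤ n → ∑ k ∈ s, μ k ^ n * (p k).eval (n : K) = 0) :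
    ∀ k ∈ s, p k = 0 := by
  classical
  induction s using Finset.induction_on generalizing p with
  | empty => simp
  | @insert a t ha ih =>
    have hμt : ∀ k ∈ t, μ k ≠ 0 := fun k hk => hμ k (Finset.mem_insert_of_mem hk)
    -- `expDiff (μ a) (μ a) ^ d` kills `p a` and is injective on the other components.
    set d := (p a).natDegree + 1
    have hkill : (expDiff (μ a) (μ a) ^ d) (p a) = 0 :=
      expDiff_self_pow_eq_zero _ (degree_le_natDegree.trans_lt (by exact_mod_cast Nat.lt_succ_self _))
    have ht : ∀ k ∈ t, p k = 0 := by
      intro k hk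
      have hne : μ k ≠ μ a := fun he => ha
        (hinj (Finset.mem_insert_of_mem hk) (Finset.mem_insert_self a t) he ▸ hk)
      have hpow : Function.Injective (expDiff (μ a) (μ k) ^ d) := by
        rw [Module.End.coe_pow]
        exact (expDiff_injective hne).iterate d
      refine hpow ?_
      rw [map_zero]
      refine ih (p := fun k => (expDiff (μ a) (μ k) ^ d) (p k)) hμt
        (hinj.mono (Finset.subset_insert a t)) (fun n hn => ?_) k hk
      simpa [Finset.sum_insert ha, hkill] using
        sum_zpow_mul_eval_expDiff_pow_eq_zero hμ (μ a) h d n hn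
    have hpa : p a = 0 := eq_zero_of_forall_le_eval_intCast_eq_zero fun n hn => by
      have := h n hn
      rw [Finset.sum_insert ha, Finset.sum_eq_zero fun k hk => by rw [ht k hk, eval_zero, mul_zero],
        add_zero] at this
      exact (mul_eq_zero.mp this).resolve_left
        (zpow_ne_zero n (hμ a (Finset.mem_insert_self a t)))
    simpa [hpa] using ht

theorem eq_zero_of_sum_zpow_smul_eq_zero {W : Type*} [AddCommGroup W] [Module K W]
    (s : Finset ι) (hμ : ∀ k ∈ s, μ k ≠ 0) (hinj : Set.InjOn μ s) {D : ℕ} {w : ι → ℕ → W}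
    (h : ∀ n : ℤ, N₀ ≤ n →
      ∑ k ∈ s, ∑ j ∈ Finset.range D, (μ k ^ n * (n : K) ^ j) • w k j = 0) :
    ∀ k ∈ s, ∀ j < D, w k j = 0 := by
  intro k hk j hj
  refine (Module.forall_dual_apply_eq_zero_iff K (w k j)).mp fun φ => ?_
  let q : ι → K[X] := fun k => ∑ j ∈ Finset.range D, C (φ (w k j)) * X ^ j
  have hq := eq_zero_of_sum_zpow_mul_eval_eq_zero (p := q) s hμ hinj (fun n hn => by
    simpa [q, eval_finsetSum, Finset.mul_sum, mul_assoc, mul_comm (φ _)] using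
      congrArg φ (h n hn)) k hk
  simpa [q, finsetSum_coeff, coeff_C_mul_X_pow, hj] using congrArg (coeff · j) hq

theorem coeff_mem_of_sum_zpow_smul_eval_mem {A W : Type*} [CommRing A] [Algebra K A]
    [AddCommGroup W] [Module K W] (f : A →ₗ[K] W) (Q : Submodule K W) (s : Finset ι)
    (hμ : ∀ k ∈ s, μ k ≠ 0) (hinj : Set.InjOn μ s) {P : ι → A[X]}
    (h : ∀ n : ℤ, N₀ ≤ n → ∑ k ∈ s, μ k ^ n • f ((P k).eval (algebraMap K A n)) ∈ Q) :
    ∀ k ∈ s, ∀ j, f ((P k).coeff j) ∈ Q := by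
  set D := s.sup (fun k => (P k).natDegree) + 1
  have hdeg : ∀ k ∈ s, (P k).natDegree < D := fun k hk =>
    Nat.lt_succ_of_le (Finset.le_sup (f := fun k => (P k).natDegree) hk)
  have := eq_zero_of_sum_zpow_smul_eq_zero s hμ hinj (D := D)
    (w := fun k j => Q.mkQ (f ((P k).coeff j))) (N₀ := N₀) fun n hn => by
      rw [← (Submodule.Quotient.mk_eq_zero Q).mpr (h n hn), ← Submodule.mkQ_apply, map_sum]
      refine Finset.sum_congr rfl fun k hk => ?_
      rw [eval_eq_sum_range' (hdeg k hk), map_smul, map_sum, map_sum, Finset.smul_sum]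
      refine Finset.sum_congr rfl fun j _ => ?_
      rw [← map_pow, mul_comm ((P k).coeff j), ← Algebra.smul_def, map_smul, map_smul,
        smul_smul]
  intro k hk j
  rcases lt_or_ge j D with hj | hj
  · exact (Submodule.Quotient.mk_eq_zero Q).mp (this k hk j hj)
  · rw [coeff_eq_zero_of_natDegree_lt ((hdeg k hk).trans_le hj), map_zero]
    exact Q.zero_mem

end Polynomial

section MvPolynomial

variable {σ M M' : Type*} [AddCommGroup M] [Module ℂ M] [AddCommGroup M'] [Module ℂ M']

theorem mkLin_monomial (φ : (σ →₀ ℕ) → M) (d : σ →₀ ℕ) :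
    mkLin φ (MvPolynomial.monomial d 1) = φ d := by
  simpa [mkLin, MvPolynomial.coe_basisMonomials] using
    (MvPolynomial.basisMonomials σ ℂ).constr_basis ℂ φ d

theorem mkLin_comp (φ : (σ →₀ ℕ) → M) (g : M →ₗ[ℂ] M') :
    mkLin (fun d => g (φ d)) = g ∘ₗ mkLin φ :=
  (MvPolynomial.basisMonomials σ ℂ).ext fun d => by
    simp [MvPolynomial.coe_basisMonomials, mkLin_monomial]

theorem mkLin_eq_mulLeft {φ : (σ →₀ ℕ) → MvPolynomial σ ℂ} (a : MvPolynomial σ ℂ)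
    (hφ : ∀ d, φ d = a * MvPolynomial.monomial d 1) : mkLin φ = LinearMap.mulLeft ℂ a :=
  (MvPolynomial.basisMonomials σ ℂ).ext fun d => by
    simp [MvPolynomial.coe_basisMonomials, mkLin_monomial, hφ]

end MvPolynomial

theorem X_pow_mul_X_pow_mul_others {m : ℕ} (k : Fin m) (d : WVars m →₀ ℕ) :
    (MvPolynomial.X (Sum.inl k) : MvPolynomial (WVars m) ℂ) ^ d (Sum.inl k) *
      MvPolynomial.X (Sum.inr k) ^ d (Sum.inr k) * others k d = MvPolynomial.monomial d 1 := by
  rw [others, MvPolynomial.X_pow_eq_monomial, MvPolynomial.X_pow_eq_monomial,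
    MvPolynomial.monomial_mul, MvPolynomial.monomial_mul, one_mul, one_mul, add_assoc]
  congr 1
  conv_rhs => rw [← Finsupp.single_add_erase (Sum.inl k) d,
    ← Finsupp.single_add_erase (Sum.inr k) (d.erase (Sum.inl k))]
  rw [Finsupp.erase_ne (by simp)]

section Sites

variable {m : ℕ}

-- In `siteWPoly` and `siteLPoly` the polynomial variable `X` stands for the mode index `n`.
noncomputable def siteWPoly (alpha : Fin m → ℂ) (k : Fin m) :
    MvPolynomial (WVars m) ℂ →ₗ[ℂ] (MvPolynomial (WVars m) ℂ)[X] :=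
  mkLin fun d => (C (MvPolynomial.X (Sum.inr k)) - X * C (MvPolynomial.C (alpha k))) *
    (C (MvPolynomial.X (Sum.inl k)) - X) ^ d (Sum.inl k) *
    C (MvPolynomial.X (Sum.inr k) ^ d (Sum.inr k) * others k d)

noncomputable def siteLPoly (alpha : Fin m → ℂ) (h : Fin m → ℂ[X]) (k : Fin m) :
    MvPolynomial (WVars m) ℂ →ₗ[ℂ] (MvPolynomial (WVars m) ℂ)[X] :=
  mkLin fun d => (C (MvPolynomial.X (Sum.inl k)) - X) ^ d (Sum.inl k) * C (others k d) *
    (C (MvPolynomial.X (Sum.inl k) * MvPolynomial.X (Sum.inr k) ^ d (Sum.inr k))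
      + X * C (aeval (MvPolynomial.X (Sum.inr k)) (Gmap (alpha k) (h k) (X ^ d (Sum.inr k))))
      - X ^ 2 * C (alpha k • aeval (MvPolynomial.X (Sum.inr k))
          (Fmap (alpha k) (h k) (X ^ d (Sum.inr k)))))

theorem siteW_apply (lam alpha : Fin m → ℂ) (n : ℤ) (k : Fin m) (q : MvPolynomial (WVars m) ℂ) :
    siteW lam alpha n k q = lam k ^ n • (siteWPoly alpha k q).eval (MvPolynomial.C (n : ℂ)) := by
  have : siteW lam alpha n k =
      (lam k ^ n • (leval (MvPolynomial.C (n : ℂ))).restrictScalars ℂ) ∘ₗ siteWPoly alpha k := by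
    rw [siteWPoly, ← mkLin_comp, siteW]
    congr 1
    funext d
    simp only [LinearMap.smul_apply, LinearMap.restrictScalars_apply, leval_apply, eval_mul,
      eval_sub, eval_pow, eval_C, eval_X, map_mul]
    rw [mul_assoc]
  simpa using LinearMap.congr_fun this q

theorem siteL_apply (lam alpha : Fin m → ℂ) (h : Fin m → ℂ[X]) (n : ℤ) (k : Fin m)
    (q : MvPolynomial (WVars m) ℂ) :
    siteL lam alpha h n k q =
      lam k ^ n • (siteLPoly alpha h k q).eval (MvPolynomial.C (n : ℂ)) := by
  have : siteL lam alpha h n k =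
      (lam k ^ n • (leval (MvPolynomial.C (n : ℂ))).restrictScalars ℂ) ∘ₗ siteLPoly alpha h k := by
    rw [siteLPoly, ← mkLin_comp, siteL]
    congr 1
    funext d
    simp only [LinearMap.smul_apply, LinearMap.restrictScalars_apply, leval_apply, eval_mul,
      eval_sub, eval_add, eval_pow, eval_C, eval_X, MvPolynomial.smul_eq_C_mul, map_mul, map_pow]
    ring
  simpa using LinearMap.congr_fun this q

theorem coeff_zero_siteWPoly (alpha : Fin m → ℂ) (k : Fin m) (q : MvPolynomial (WVars m) ℂ) :
    (siteWPoly alpha k q).coeff 0 = MvPolynomial.X (Sum.inr k) * q := by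
  have : (lcoeff _ 0).restrictScalars ℂ ∘ₗ siteWPoly alpha k =
      LinearMap.mulLeft ℂ (MvPolynomial.X (Sum.inr k)) := by
    rw [siteWPoly, ← mkLin_comp]
    refine mkLin_eq_mulLeft _ fun d => ?_
    simp only [LinearMap.coe_restrictScalars, lcoeff_apply, coeff_zero_eq_eval_zero, eval_mul,
      eval_sub, eval_pow, eval_C, eval_X, sub_zero, ← X_pow_mul_X_pow_mul_others k d]
    ring
  simpa using LinearMap.congr_fun this q

theorem coeff_zero_siteLPoly (alpha : Fin m → ℂ) (h : Fin m → ℂ[X]) (k : Fin m)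
    (q : MvPolynomial (WVars m) ℂ) :
    (siteLPoly alpha h k q).coeff 0 = MvPolynomial.X (Sum.inl k) * q := by
  have : (lcoeff _ 0).restrictScalars ℂ ∘ₗ siteLPoly alpha h k =
      LinearMap.mulLeft ℂ (MvPolynomial.X (Sum.inl k)) := by
    rw [siteLPoly, ← mkLin_comp]
    refine mkLin_eq_mulLeft _ fun d => ?_
    simp only [LinearMap.coe_restrictScalars, lcoeff_apply, coeff_zero_eq_eval_zero, eval_mul,
      eval_sub, eval_add, eval_pow, eval_C, eval_X, zero_pow two_ne_zero, zero_mul, sub_zero,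
      add_zero, ← X_pow_mul_X_pow_mul_others k d]
    ring
  simpa using LinearMap.congr_fun this q

end Sites

section TensorProduct

variable {R A V : Type*} [CommRing R] [AddCommGroup A] [Module R A] [AddCommGroup V] [Module R V]

theorem Submodule.eq_top_of_forall_tmul_mem {N : Submodule R (A ⊗[R] V)}
    (h : ∀ a x, a ⊗ₜ[R] x ∈ N) : N = ⊤ := by
  rw [eq_top_iff, ← TensorProduct.span_tmul_eq_top, Submodule.span_le]
  rintro _ ⟨a, x, rfl⟩
  exact h a x

theorem map_mem_iInf_comap_mk {N : Submodule R (A ⊗[R] V)} {op : Module.End R (A ⊗[R] V)}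
    {σ : Module.End R A} {τ : Module.End R V} (hop : ∀ a x, op (a ⊗ₜ x) = σ a ⊗ₜ x + a ⊗ₜ τ x)
    (hN : ∀ y ∈ N, op y ∈ N) {x : V} (hx : x ∈ ⨅ a, N.comap (TensorProduct.mk R A V a)) :
    τ x ∈ ⨅ a, N.comap (TensorProduct.mk R A V a) := by
  simp only [Submodule.mem_iInf, Submodule.mem_comap, TensorProduct.mk_apply] at hx ⊢
  intro a
  simpa [hop] using N.sub_mem (hN _ (hx a)) (hx (σ a))

end TensorProduct

section TensorModule

variable {m : ℕ} {V : Type*} [AddCommGroup V] [Module ℂ V]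
  {lam alpha : Fin m → ℂ} {h : Fin m → ℂ[X]} {ρV : WIdx → Module.End ℂ V}

theorem bigRho_W_tmul {n : ℤ} {v : V} (hv : ρV (.W n) v = 0) (q : MvPolynomial (WVars m) ℂ) :
    bigRho lam alpha h ρV (.W n) (q ⊗ₜ v) =
      ∑ k, lam k ^ n • ((siteWPoly alpha k q).eval (MvPolynomial.C (n : ℂ)) ⊗ₜ v) := by
  simp [bigRho, hv, siteW_apply, smul_tmul']

theorem bigRho_L_tmul {n : ℤ} {v : V} (hv : ρV (.L n) v = 0) (q : MvPolynomial (WVars m) ℂ) :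
    bigRho lam alpha h ρV (.L n) (q ⊗ₜ v) =
      ∑ k, lam k ^ n • ((siteLPoly alpha h k q).eval (MvPolynomial.C (n : ℂ)) ⊗ₜ v) := by
  simp [bigRho, hv, siteL_apply, smul_tmul']

theorem exists_bigRho_tmul (lam alpha : Fin m → ℂ) (h : Fin m → ℂ[X])
    (ρV : WIdx → Module.End ℂ V) (b : WIdx) : ∃ σ : Module.End ℂ (MvPolynomial (WVars m) ℂ),
    ∀ p x, bigRho lam alpha h ρV b (p ⊗ₜ x) = σ p ⊗ₜ x + p ⊗ₜ ρV b x := by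
  cases b with
  | L n => exact ⟨∑ k, siteL lam alpha h n k, by simp [bigRho, sum_tmul]⟩
  | W n => exact ⟨∑ k, siteW lam alpha n k, by simp [bigRho, sum_tmul]⟩
  | C => exact ⟨0, by simp [bigRho]⟩

variable {N : Submodule ℂ (TMod m V)} {v : V} {N₀ : ℤ}

theorem wInvariant_iInf_comap_mk (hN : WInvariant (bigRho lam alpha h ρV) N) :
    WInvariant ρV (⨅ p, N.comap (TensorProduct.mk ℂ (MvPolynomial (WVars m) ℂ) V p)) := by
  intro b x hx
  obtain ⟨σ, hσ⟩ := exists_bigRho_tmul lam alpha h ρV b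
  exact map_mem_iInf_comap_mk hσ (hN b) hx

theorem X_mul_tmul_mem (hlam : ∀ k, lam k ≠ 0) (hinj : Function.Injective lam)
    (hN : WInvariant (bigRho lam alpha h ρV) N)
    (hv : ∀ n, N₀ ≤ n → ρV (.L n) v = 0 ∧ ρV (.W n) v = 0)
    {q : MvPolynomial (WVars m) ℂ} (hq : q ⊗ₜ v ∈ N) (i : WVars m) :
    (MvPolynomial.X i * q) ⊗ₜ v ∈ N := by
  have key (P : Fin m → (MvPolynomial (WVars m) ℂ)[X])
      (hP : ∀ n, N₀ ≤ n → ∑ k, lam k ^ n • ((P k).eval (MvPolynomial.C (n : ℂ)) ⊗ₜ v) ∈ N)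
      (k : Fin m) : (P k).coeff 0 ⊗ₜ v ∈ N :=
    Polynomial.coeff_mem_of_sum_zpow_smul_eval_mem ((TensorProduct.mk ℂ _ V).flip v) N
      Finset.univ (fun k _ => hlam k) hinj.injOn (by simpa using hP) k (Finset.mem_univ k) 0
  rcases i with k | k
  · simpa [coeff_zero_siteLPoly] using key (fun k => siteLPoly alpha h k q)
      (fun n hn => bigRho_L_tmul (hv n hn).1 q ▸ hN (.L n) _ hq) k
  · simpa [coeff_zero_siteWPoly] using key (fun k => siteWPoly alpha k q)
      (fun n hn => bigRho_W_tmul (hv n hn).2 q ▸ hN (.W n) _ hq) k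

theorem tmul_mem_of_one_tmul_mem (hlam : ∀ k, lam k ≠ 0) (hinj : Function.Injective lam)
    (hN : WInvariant (bigRho lam alpha h ρV) N)
    (hv : ∀ n, N₀ ≤ n → ρV (.L n) v = 0 ∧ ρV (.W n) v = 0)
    (hmem : (1 : MvPolynomial (WVars m) ℂ) ⊗ₜ v ∈ N) (p : MvPolynomial (WVars m) ℂ) :
    p ⊗ₜ v ∈ N := by
  induction p using MvPolynomial.induction_on with
  | C a => simpa [MvPolynomial.C_eq_smul_one, smul_tmul'] using N.smul_mem a hmem
  | add p q hp hq => simpa [add_tmul] using N.add_mem hp hq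
  | mul_X p i hp => simpa [mul_comm] using X_mul_tmul_mem hlam hinj hN hv hp i

end TensorModule

theorem one_tensor_v_generates_general {m : ℕ} {V : Type*} [AddCommGroup V] [Module ℂ V]
    (lam alpha : Fin m → ℂ) (h : Fin m → Polynomial ℂ)
    (hlam : ∀ k, lam k ≠ 0) (hinj : Function.Injective lam)
    (R : WRep V) (hres : WRestricted R.ρ) (hsimp : WSimple R.ρ)
    (v : V) (hv : v ≠ 0)
    (N : Submodule ℂ (TMod m V))
    (hN : WInvariant (M := TMod m V) (bigRho lam alpha h R.ρ) N)
    (hmem : (1 : MvPolynomial (WVars m) ℂ) ⊗ₜ[ℂ] v ∈ N) :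
    N = ⊤ := by
  obtain ⟨N₀, hN₀⟩ := hres v
  set U := ⨅ p, N.comap (TensorProduct.mk ℂ (MvPolynomial (WVars m) ℂ) V p)
  have hvU : v ∈ U := by
    simpa [U] using tmul_mem_of_one_tmul_mem hlam hinj hN hN₀ hmem
  rcases hsimp.2 U (wInvariant_iInf_comap_mk hN) with hbot | htop
  · exact absurd (hbot ▸ hvU) (by simpa using hv)
  · refine Submodule.eq_top_of_forall_tmul_mem fun p x => ?_
    have hx : x ∈ U := htop ▸ Submodule.mem_top
    exact (Submodule.mem_iInf _).mp hx p

/-- For pairwise distinct λ_k ∈ ℂ*, α_k ∈ ℂ*, and V a simple restricted W(2,2)-module,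
the element 1 ⊗ ⋯ ⊗ 1 ⊗ v (v ≠ 0) generates T = ⊗_k Ω(λ_k,α_k,h_k) ⊗ V: any invariant
subspace containing it is all of T. -/
theorem one_tensor_v_generates {m : ℕ} {V : Type*} [AddCommGroup V] [Module ℂ V]
    (lam alpha : Fin m → ℂ) (h : Fin m → Polynomial ℂ)
    (hlam : ∀ k, lam k ≠ 0) (hinj : Function.Injective lam) (halpha : ∀ k, alpha k ≠ 0)
    (R : WRep V) (hres : WRestricted R.ρ) (hsimp : WSimple R.ρ)
    (v : V) (hv : v ≠ 0)
    (N : Submodule ℂ (TMod m V))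
    (hN : WInvariant (M := TMod m V) (bigRho lam alpha h R.ρ) N)
    (hmem : (1 : MvPolynomial (WVars m) ℂ) ⊗ₜ[ℂ] v ∈ N) :
    N = ⊤ :=
  one_tensor_v_generates_general lam alpha h hlam hinj R hres hsimp v hv N hN hmem
end
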